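/- arXiv:1505.08161 — 9 statements merged into one kernel-verified Lean document; each statement's English description precedes it below -/
import Mathlib

section
/- Let (X,d) be a ν-generalized metric space and {x_n} a sequence in X whose terms are pairwise distinct. Suppose that for every ε > 0 and for any two subsequences {x_{p_i}}, {x_{q_i}}, if limsup_{i→∞} d(x_{p_i}, x_{q_i}) ≤ ε then there exists N such that d(x_{p_i+1}, x_{q_i+1}) ≤ ε for all i ≥ N. If d(x_n, x_{n+1}) → 0, then {x_n} is ν-Cauchy. -/
/-!
Fix `r > 0` and suppose infinitely many `n` admit an `m` with `d(xₙ, x_{n+1+mν}) > r`. Since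
consecutive distances are eventually `≤ r`, each such `n` has a crossing `m`:
`d(xₙ, x_{n+1+mν}) ≤ r < d(xₙ, x_{n+1+(m+1)ν})`. The polygon
`x_{n-1}, xₙ, x_{n+1+mν}, x_{n+2+mν}, …, x_{n+(m+1)ν}` has `ν + 2` distinct vertices, so
`d(x_{n-1}, x_{n+(m+1)ν})` is at most `r` plus `ν` consecutive distances. Along these indices
`pᵢ = nᵢ - 1`, `qᵢ = nᵢ + (mᵢ+1)ν` the limsup of `d(x_{pᵢ}, x_{qᵢ})` is therefore `≤ r`, and the
hypothesis yields `d(x_{nᵢ}, x_{nᵢ+1+(mᵢ+1)ν}) ≤ r` for large `i`, contradicting the crossing.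
-/

open Filter Topology

/-- `(X,d)` is a ν-generalized metric space. -/
def NuGenMetric (ν : ℕ) {X : Type*} (d : X → X → ℝ) : Prop :=
  (∀ x y, 0 ≤ d x y) ∧
  (∀ x y, d x y = 0 ↔ x = y) ∧
  (∀ x y, d x y = d y x) ∧
  (∀ u : Fin (ν + 2) → X, Function.Injective u →
    d (u 0) (u (Fin.last (ν + 1))) ≤ ∑ i : Fin (ν + 1), d (u i.castSucc) (u i.succ))

/-- `{x n}` is `k`-Cauchy: `lim_n sup_m d(x_n, x_{n+1+mk}) = 0` (sup taken in `[0,∞]`). -/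
def IsKCauchy {X : Type*} (d : X → X → ℝ) (x : ℕ → X) (k : ℕ) : Prop :=
  Filter.Tendsto (fun n => ⨆ m : ℕ, ENNReal.ofReal (d (x n) (x (n + 1 + m * k))))
    Filter.atTop (nhds 0)

open Finset

theorem Nat.exists_le_and_lt_succ_of_lt {α : Type*} [LinearOrder α] {f : ℕ → α} {r : α}
    (h0 : f 0 ≤ r) {M : ℕ} (hM : r < f M) : ∃ m, f m ≤ r ∧ r < f (m + 1) := by
  by_contra! h
  exact (Nat.rec h0 (fun m hm => h m hm) M : f M ≤ r).not_gt hM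

theorem ENNReal.limsup_ofReal_le_of_forall_pos {f : ℕ → ℝ} {r : ℝ} (hr : 0 ≤ r)
    (h : ∀ ε > (0 : ℝ), ∀ᶠ i in atTop, f i ≤ r + ε) :
    limsup (fun i => ENNReal.ofReal (f i)) atTop ≤ ENNReal.ofReal r := by
  refine ENNReal.le_of_forall_pos_le_add fun ε hε _ => limsup_le_of_le (by isBoundedDefault) ?_
  filter_upwards [h ε hε] with i hi
  rw [← ENNReal.ofReal_coe_nnreal, ← ENNReal.ofReal_add hr ε.coe_nonneg]
  exact ENNReal.ofReal_le_ofReal hi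

theorem isKCauchy_of_forall_eventually {X : Type*} {d : X → X → ℝ} {x : ℕ → X} {k : ℕ}
    (h : ∀ r > (0 : ℝ), ∀ᶠ n in atTop, ∀ m, d (x n) (x (n + 1 + m * k)) ≤ r) :
    IsKCauchy d x k := by
  refine ENNReal.tendsto_nhds_zero.2 fun ε hε => ?_
  obtain ⟨r, -, hr0, hrε⟩ := ENNReal.lt_iff_exists_real_btwn.1 hε
  filter_upwards [h r (ENNReal.ofReal_pos.1 hr0)] with n hn
  exact iSup_le fun m => (ENNReal.ofReal_le_ofReal (hn m)).trans hrε.le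

namespace NuGenMetric

variable {X : Type*} {ν : ℕ} {d : X → X → ℝ}

theorem le_sum_range (hX : NuGenMetric ν d) {y : ℕ → X} (hy : Function.Injective y) :
    d (y 0) (y (ν + 1)) ≤ ∑ i ∈ range (ν + 1), d (y i) (y (i + 1)) := by
  have h := hX.2.2.2 (fun i => y i) (hy.comp Fin.val_injective)
  rwa [← Fin.sum_univ_eq_sum_range (fun i => d (y i) (y (i + 1)))]

theorem dist_le_of_forall_dist_succ_le (hX : NuGenMetric ν d) (hν : 0 < ν) {x : ℕ → X}
    (hx : Function.Injective x) {a : ℕ} {c : ℝ} (hc : ∀ k ≥ a, d (x k) (x (k + 1)) ≤ c) (m : ℕ) :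
    d (x a) (x (a + 1 + (m + 1) * ν)) ≤ d (x (a + 1)) (x (a + 1 + 1 + m * ν)) + ν * c := by
  obtain ⟨μ, rfl⟩ := Nat.exists_eq_add_one_of_ne_zero hν.ne'
  set b := a + 1 + 1 + m * (μ + 1)
  set g : ℕ → ℕ := fun i => if i < 2 then a + i else b + (i - 2)
  have hg : StrictMono g := strictMono_nat_of_lt_succ fun i => by
    simp only [g]; split_ifs <;> omega
  have hg0 : g 0 = a := rfl
  have hg1 : g 1 = a + 1 := rfl
  have hg2 : ∀ i, g (i + 1 + 1) = b + i := fun i => by simp only [g]; split_ifs <;> omega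
  have h := hX.le_sum_range (hx.comp hg.injective)
  simp only [sum_range_succ', Function.comp_apply, zero_add, add_zero, hg0, hg1, hg2,
    ← add_assoc] at h
  have hrest : ∑ i ∈ range μ, d (x (b + i)) (x (b + i + 1)) ≤ μ * c := by
    simpa using sum_le_sum fun i (_ : i ∈ range μ) => hc (b + i) (by omega)
  calc d (x a) (x (a + 1 + (m + 1) * (μ + 1))) = d (x a) (x (b + μ)) := by
        congr 2; simp only [b]; ring
    _ ≤ _ := h
    _ ≤ μ * c + d (x (a + 1)) (x b) + c := by gcongr; exact hc a le_rfl
    _ = _ := by push_cast; ring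

theorem eventually_forall_dist_le (hX : NuGenMetric ν d) (hν : 0 < ν) {x : ℕ → X}
    (hx : Function.Injective x) {r : ℝ} (hr : 0 < r)
    (hsub : ∀ p q : ℕ → ℕ, StrictMono p → StrictMono q →
      limsup (fun i => ENNReal.ofReal (d (x (p i)) (x (q i)))) atTop ≤ ENNReal.ofReal r →
      ∃ N, ∀ i ≥ N, d (x (p i + 1)) (x (q i + 1)) ≤ r)
    (hd : Tendsto (fun n => d (x n) (x (n + 1))) atTop (𝓝 0)) :
    ∀ᶠ n in atTop, ∀ m, d (x n) (x (n + 1 + m * ν)) ≤ r := by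
  have hstep : ∀ c > 0, ∀ᶠ k in atTop, d (x k) (x (k + 1)) ≤ c := fun c hc =>
    hd.eventually (eventually_le_nhds hc)
  -- index the bad points as `a + 1`, so that `a` is the left end of the shortcut polygon
  rw [← map_add_atTop_eq_nat 1]
  by_contra hbad
  simp only [eventually_map, not_eventually, not_forall, not_le] at hbad
  obtain ⟨φ, hφ, hcross⟩ := extraction_of_frequently_atTop <|
    (hbad.and_eventually ((hstep r hr).filter_mono (tendsto_add_atTop_nat 1))).mono
      fun a ⟨⟨M, hM⟩, h0⟩ => Nat.exists_le_and_lt_succ_of_lt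
        (f := fun m => d (x (a + 1)) (x (a + 1 + 1 + m * ν))) (by simpa using h0) hM
  choose m hm_le hm_gt using hcross
  obtain ⟨q, hq⟩ : ∃ q : ℕ → ℕ, ∀ i, q i = φ i + 1 + (m i + 1) * ν := ⟨_, fun _ => rfl⟩
  obtain ⟨ψ, hψ, hqψ⟩ := strictMono_subseq_of_tendsto_atTop <|
    tendsto_atTop_mono (g := q) (fun i => by rw [hq]; omega) hφ.tendsto_atTop
  have hlimsup : limsup (fun i => ENNReal.ofReal (d (x (φ (ψ i))) (x (q (ψ i))))) atTop
      ≤ ENNReal.ofReal r := by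
    refine ENNReal.limsup_ofReal_le_of_forall_pos hr.le fun ε hε => ?_
    obtain ⟨K, hK⟩ := eventually_atTop.1 (hstep (ε / ν) (by positivity))
    filter_upwards [(hφ.comp hψ).tendsto_atTop.eventually_ge_atTop K] with i hi
    rw [hq]
    calc d (x (φ (ψ i))) (x (φ (ψ i) + 1 + (m (ψ i) + 1) * ν))
        ≤ d (x (φ (ψ i) + 1)) (x (φ (ψ i) + 1 + 1 + m (ψ i) * ν)) + ν * (ε / ν) :=
          hX.dist_le_of_forall_dist_succ_le hν hx (fun k hk => hK k (hi.trans hk)) _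
      _ ≤ r + ε := by
          rw [mul_div_cancel₀ _ (by positivity)]
          gcongr
          exact hm_le _
  obtain ⟨N, hN⟩ := hsub _ _ (hφ.comp hψ) hqψ hlimsup
  have hqN : q (ψ N) + 1 = φ (ψ N) + 1 + 1 + (m (ψ N) + 1) * ν := by rw [hq]; ring
  have hgood := hN N le_rfl
  rw [Function.comp_apply, Function.comp_apply, hqN] at hgood
  exact (hm_gt (ψ N)).not_ge hgood

end NuGenMetric

theorem stmt_0 {X : Type*} (ν : ℕ) (hν : 0 < ν) (d : X → X → ℝ)
    (hX : NuGenMetric ν d) (x : ℕ → X) (hinj : Function.Injective x)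
    (hsub : ∀ ε > (0 : ℝ), ∀ p q : ℕ → ℕ, StrictMono p → StrictMono q →
      Filter.limsup (fun i => ENNReal.ofReal (d (x (p i)) (x (q i)))) Filter.atTop
        ≤ ENNReal.ofReal ε →
      ∃ N, ∀ i ≥ N, d (x (p i + 1)) (x (q i + 1)) ≤ ε)
    (hd : Filter.Tendsto (fun n => d (x n) (x (n + 1))) Filter.atTop (nhds 0)) :
    IsKCauchy d x ν :=
  isKCauchy_of_forall_eventually fun r hr =>
    hX.eventually_forall_dist_le hν hinj hr (hsub r hr) hd
end

section
/- Let (X,d) be a ν-generalized metric space and {x_n} a sequence of pairwise distinct points such that d(x_n, x_{n+1}) → 0 and d(x_n, x_{n+2}) → 0. Suppose that for every ε > 0 and for any two subsequences {x_{p_i}}, {x_{q_i}}, if limsup_{i→∞} d(x_{p_i}, x_{q_i}) ≤ ε then there exists N with d(x_{p_i+1}, x_{q_i+1}) ≤ ε for all i ≥ N. Then {x_n} is a Cauchy sequence (i.e., 1-Cauchy). -/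
open Filter Topology

/-!
Suppose the sequence is not Cauchy. Then for some `ε > 0` there are arbitrarily late pairs
`a + 1 < b` with `d(x_{a+1}, x_b) ≤ ε < d(x_{a+1}, x_{b+1})` (take `b + 1` to be the first index
that is `ε`-far from `x_{a+1}`). Applying the `ν`-polygonal inequality to a path from `x_a` to
`x_b` that zigzags through `x_{a+1-ν}, …, x_{a+1}` in steps of length one or two and then jumps
to `x_b` shows `d(x_a, x_b) ≤ ε + ν δ`, where `δ` bounds the distances of sequence points at
most two indices apart; as `δ → 0`, the limsup of `d(x_a, x_b)` is at most `ε`. The hypothesis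
then forces `d(x_{a+1}, x_{b+1}) ≤ ε` for late pairs, a contradiction.
-/

/-- For `j ≤ ν` this enumerates `1, 3, 5, …` and then the even numbers down to `0`: a path
through `{0, …, ν}` from `1` to `0` whose steps have length one or two. -/
def zigzag (ν j : ℕ) : ℕ :=
  if 2 * j + 1 ≤ ν then 2 * j + 1 else 2 * ν - 2 * j

lemma zigzag_le (ν j : ℕ) : zigzag ν j ≤ ν := by
  unfold zigzag; split_ifs <;> omega

lemma zigzag_injOn (ν : ℕ) : Set.InjOn (zigzag ν) (Set.Iic ν) := by
  intro j hj k hk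
  simp only [Set.mem_Iic] at hj hk
  unfold zigzag; split_ifs <;> omega

lemma zigzag_zero {ν : ℕ} (hν : 0 < ν) : zigzag ν 0 = 1 := by
  unfold zigzag; split_ifs <;> omega

lemma zigzag_self (ν : ℕ) : zigzag ν ν = 0 := by
  unfold zigzag; split_ifs <;> omega

lemma zigzag_succ_le_and_le_succ (ν j : ℕ) :
    zigzag ν (j + 1) ≤ zigzag ν j + 2 ∧ zigzag ν j ≤ zigzag ν (j + 1) + 2 := by
  unfold zigzag; split_ifs <;> omega

lemma limsup_ofReal_le_of_forall_eventually_le_add {ι : Type*} {l : Filter ι} {f : ι → ℝ}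
    {ε : ℝ} (h : ∀ η > 0, ∀ᶠ i in l, f i ≤ ε + η) :
    limsup (fun i => ENNReal.ofReal (f i)) l ≤ ENNReal.ofReal ε := by
  refine ENNReal.le_of_forall_pos_le_add fun η hη _ => limsup_le_of_le (by isBoundedDefault) ?_
  filter_upwards [h η (by exact_mod_cast hη)] with i hi
  calc ENNReal.ofReal (f i) ≤ ENNReal.ofReal (ε + η) := ENNReal.ofReal_le_ofReal hi
    _ ≤ ENNReal.ofReal ε + η := by simpa using ENNReal.ofReal_add_le (p := ε) (q := η)

section

variable {X : Type*} {ν : ℕ} {d : X → X → ℝ} {x : ℕ → X}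

namespace NuGenMetric

lemma dist_le_sum_range (hX : NuGenMetric ν d) (f : ℕ → X)
    (hf : Set.InjOn f (Set.Iic (ν + 1))) :
    d (f 0) (f (ν + 1)) ≤ ∑ j ∈ Finset.range (ν + 1), d (f j) (f (j + 1)) := by
  have hinj : Function.Injective fun i : Fin (ν + 2) => f i := fun i k hik =>
    Fin.ext (hf (Set.mem_Iic.2 (Nat.lt_succ_iff.1 i.isLt))
      (Set.mem_Iic.2 (Nat.lt_succ_iff.1 k.isLt)) hik)
  simpa [Fin.sum_univ_eq_sum_range (fun j => d (f j) (f (j + 1)))] using hX.2.2.2 _ hinj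

lemma dist_le_mul_add_dist_succ (hX : NuGenMetric ν d) (hν : 0 < ν)
    (hinj : Function.Injective x) {M : ℕ} {δ : ℝ}
    (h1 : ∀ n ≥ M, d (x n) (x (n + 1)) ≤ δ) (h2 : ∀ n ≥ M, d (x n) (x (n + 2)) ≤ δ)
    {p r : ℕ} (hp : M + ν ≤ p + 1) (hpr : p + 1 < r) :
    d (x p) (x r) ≤ ν * δ + d (x (p + 1)) (x r) := by
  have hnear : ∀ a b, M ≤ a → M ≤ b → a ≠ b → a ≤ b + 2 → b ≤ a + 2 → d (x a) (x b) ≤ δ := by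
    intro a b ha hb hab hab' hba'
    rcases lt_or_gt_of_ne hab with h | h
    · obtain rfl | rfl : b = a + 1 ∨ b = a + 2 := by omega
      exacts [h1 a ha, h2 a ha]
    · rw [hX.2.2.1]
      obtain rfl | rfl : a = b + 1 ∨ a = b + 2 := by omega
      exacts [h1 b hb, h2 b hb]
  let idx : ℕ → ℕ := fun j => if j ≤ ν then p + 1 - zigzag ν j else r
  have hidx : ∀ j ≤ ν, idx j = p + 1 - zigzag ν j := fun j hj => if_pos hj
  have hidx_inj : Set.InjOn idx (Set.Iic (ν + 1)) := by
    intro j hj k hk hjk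
    simp only [Set.mem_Iic] at hj hk
    have := zigzag_le ν j; have := zigzag_le ν k
    simp only [idx] at hjk
    split_ifs at hjk with hjν hkν
    · exact zigzag_injOn ν (Set.mem_Iic.2 hjν) (Set.mem_Iic.2 hkν) (by omega)
    all_goals omega
  have hchain := hX.dist_le_sum_range (x ∘ idx) (hinj.comp_injOn hidx_inj)
  rw [Finset.sum_range_succ] at hchain
  have hsteps : ∑ j ∈ Finset.range ν, d (x (idx j)) (x (idx (j + 1))) ≤ ν * δ := by
    refine (Finset.sum_le_card_nsmul _ _ δ fun j hj => ?_).trans_eq (by simp)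
    have hj := Finset.mem_range.1 hj
    rw [hidx j hj.le, hidx (j + 1) hj]
    have := zigzag_succ_le_and_le_succ ν j
    have := zigzag_le ν j; have := zigzag_le ν (j + 1)
    have : zigzag ν j ≠ zigzag ν (j + 1) := fun h => by
      have := zigzag_injOn ν (Set.mem_Iic.2 hj.le) (Set.mem_Iic.2 (hj : j + 1 ≤ ν)) h
      omega
    exact hnear _ _ (by omega) (by omega) (by omega) (by omega) (by omega)
  have hfirst : idx 0 = p := by rw [hidx 0 hν.le, zigzag_zero hν]; omega
  have hlast : idx ν = p + 1 := by rw [hidx ν le_rfl, zigzag_self]; rfl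
  have hend : idx (ν + 1) = r := if_neg (by omega)
  simp only [Function.comp_apply, hfirst, hlast, hend] at hchain
  linarith

lemma limsup_dist_le (hX : NuGenMetric ν d) (hν : 0 < ν) (hinj : Function.Injective x)
    (hd1 : Tendsto (fun n => d (x n) (x (n + 1))) atTop (𝓝 0))
    (hd2 : Tendsto (fun n => d (x n) (x (n + 2))) atTop (𝓝 0))
    {ι : Type*} {l : Filter ι} {a b : ι → ℕ} (ha : Tendsto a l atTop)
    (hab : ∀ i, a i + 1 < b i) {ε : ℝ} (hnear : ∀ i, d (x (a i + 1)) (x (b i)) ≤ ε) :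
    limsup (fun i => ENNReal.ofReal (d (x (a i)) (x (b i)))) l ≤ ENNReal.ofReal ε := by
  refine limsup_ofReal_le_of_forall_eventually_le_add fun η hη => ?_
  have hδ : 0 < η / ν := div_pos hη (Nat.cast_pos.2 hν)
  obtain ⟨M, hM⟩ := eventually_atTop.1
    ((hd1.eventually (ge_mem_nhds hδ)).and (hd2.eventually (ge_mem_nhds hδ)))
  filter_upwards [ha.eventually_ge_atTop (M + ν)] with i hi
  have := hX.dist_le_mul_add_dist_succ hν hinj (fun n hn => (hM n hn).1)
    (fun n hn => (hM n hn).2) (by omega : M + ν ≤ a i + 1) (hab i)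
  rw [mul_div_cancel₀ _ (Nat.cast_ne_zero.2 hν.ne')] at this
  linarith [hnear i]

end NuGenMetric

lemma isKCauchy_one_of_forall_eventually
    (h : ∀ ε > 0, ∀ᶠ n in atTop, ∀ m, d (x n) (x (n + 1 + m)) ≤ ε) : IsKCauchy d x 1 := by
  refine ENNReal.tendsto_nhds_zero.2 fun ε hε => ?_
  rcases eq_or_ne ε ⊤ with rfl | hε_top
  · exact Eventually.of_forall fun _ => le_top
  filter_upwards [h ε.toReal (ENNReal.toReal_pos hε.ne' hε_top)] with n hn
  refine iSup_le fun m => ?_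
  rw [mul_one, ← ENNReal.ofReal_toReal hε_top]
  exact ENNReal.ofReal_le_ofReal (hn m)

lemma exists_strictMono_far_pairs {ε : ℝ}
    (hd1 : ∀ᶠ n in atTop, d (x n) (x (n + 1)) ≤ ε)
    (hfar : ∃ᶠ n in atTop, ∃ m, ε < d (x n) (x (n + 1 + m))) :
    ∃ a b : ℕ → ℕ, StrictMono a ∧ StrictMono b ∧ ∀ i,
      a i + 1 < b i ∧ d (x (a i + 1)) (x (b i)) ≤ ε ∧ ε < d (x (a i + 1)) (x (b i + 1)) := by
  classical
  rw [← map_add_atTop_eq_nat 1, frequently_map] at hfar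
  obtain ⟨φ, hφ, hfarφ⟩ :=
    extraction_of_frequently_atTop (hfar.and_eventually ((tendsto_add_atTop_nat 1).eventually hd1))
  let m i := Nat.find (hfarφ i).1
  let B i := φ i + 1 + m i
  have hpair : ∀ i, φ i + 1 < B i ∧ d (x (φ i + 1)) (x (B i)) ≤ ε ∧
      ε < d (x (φ i + 1)) (x (B i + 1)) := by
    intro i
    have hBi : B i = φ i + 1 + m i := rfl
    have hfar_i : ε < d (x (φ i + 1)) (x (φ i + 1 + 1 + m i)) := Nat.find_spec (hfarφ i).1
    obtain ⟨k, hk⟩ : ∃ k, m i = k + 1 := Nat.exists_eq_succ_of_ne_zero fun h0 =>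
      hfar_i.not_ge (by simpa [h0] using (hfarφ i).2)
    have hnear_i := not_lt.1 (Nat.find_min (hfarφ i).1 (by omega : k < m i))
    refine ⟨by omega, ?_, ?_⟩
    · rwa [show B i = φ i + 1 + 1 + k by omega]
    · rwa [show B i + 1 = φ i + 1 + 1 + m i by omega]
  have hB : Tendsto B atTop atTop :=
    tendsto_atTop_mono (fun i => Nat.le_add_right_of_le (Nat.le_succ _)) hφ.tendsto_atTop
  obtain ⟨θ, hθ, hBθ⟩ := strictMono_subseq_of_tendsto_atTop hB
  exact ⟨φ ∘ θ, B ∘ θ, hφ.comp hθ, hBθ, fun i => hpair (θ i)⟩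

end

theorem stmt_1 {X : Type*} (ν : ℕ) (hν : 0 < ν) (d : X → X → ℝ)
    (hX : NuGenMetric ν d) (x : ℕ → X) (hinj : Function.Injective x)
    (hd1 : Filter.Tendsto (fun n => d (x n) (x (n + 1))) Filter.atTop (nhds 0))
    (hd2 : Filter.Tendsto (fun n => d (x n) (x (n + 2))) Filter.atTop (nhds 0))
    (hsub : ∀ ε > (0 : ℝ), ∀ p q : ℕ → ℕ, StrictMono p → StrictMono q →
      Filter.limsup (fun i => ENNReal.ofReal (d (x (p i)) (x (q i)))) Filter.atTop
        ≤ ENNReal.ofReal ε →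
      ∃ N, ∀ i ≥ N, d (x (p i + 1)) (x (q i + 1)) ≤ ε) :
    IsKCauchy d x 1 := by
  refine isKCauchy_one_of_forall_eventually fun ε hε => ?_
  by_contra hnot
  obtain ⟨a, b, ha, hb, hab⟩ := exists_strictMono_far_pairs (hd1.eventually (ge_mem_nhds hε))
    (by simpa only [not_eventually, not_forall, not_le] using hnot)
  obtain ⟨N, hN⟩ := hsub ε hε a b ha hb <| hX.limsup_dist_le hν hinj hd1 hd2 ha.tendsto_atTop
    (fun i => (hab i).1) (fun i => (hab i).2.1)
  exact (hN N le_rfl).not_gt (hab N).2.2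
end

section
/- Let (X,d) be a ν-generalized metric space, {x_n} a sequence of pairwise distinct points with d(x_n,x_{n+1}) + d(x_n,x_{n+2}) → 0, and m : X × X → [0,∞) a function such that for any two subsequences {x_{p_i}}, {x_{q_i}}, limsup_i m(x_{p_i},x_{q_i}) ≤ limsup_i d(x_{p_i},x_{q_i}). If for every ε > 0 and any two subsequences {x_{p_i}}, {x_{q_i}} with limsup_i m(x_{p_i},x_{q_i}) ≤ ε there exists N such that d(x_{p_i+1},x_{q_i+1}) ≤ ε for all i ≥ N, then {x_n} is Cauchy. -/
open Filter Topology

lemma chain_bound {X : Type*} {ν : ℕ} (hν : 0 < ν) {d : X → X → ℝ}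
    (hX : NuGenMetric ν d) {x : ℕ → X} (hinj : Function.Injective x)
    {ε δ : ℝ} (hε : 0 < ε) (hδ : 0 < δ) {N a b : ℕ}
    (hsmall : ∀ n, N ≤ n → d (x n) (x (n+1)) ≤ δ ∧ d (x n) (x (n+2)) ≤ δ)
    (hNa : N + 2*ν + 4 ≤ a) (hab : a + 3 ≤ b)
    (hmin : ∀ c, a < c → c < b → d (x a) (x c) ≤ ε) :
    d (x (a-1)) (x (b-1)) ≤ ε + ((ν:ℝ)+1) * δ := by
  obtain ⟨hpos, hzero, hsymm, hpoly⟩ := hX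
  by_cases hcase : a + ν + 1 ≤ b
  · -- large gap: chain a-1, a, b-ν, b-ν+1, ..., b-1
    set idx : ℕ → ℕ := fun j => if j = 0 then a - 1 else if j = 1 then a else b - ν - 2 + j
      with hidx
    have hmono : ∀ j j', j ≤ ν+1 → j' ≤ ν+1 → idx j = idx j' → j = j' := by
      intro j j' hj hj' h
      simp only [hidx] at h
      split_ifs at h <;> omega
    have hu : Function.Injective (fun i : Fin (ν+2) => x (idx i.val)) := by
      intro i i' h
      exact Fin.ext (hmono _ _ (Nat.lt_succ_iff.mp i.isLt) (Nat.lt_succ_iff.mp i'.isLt) (hinj h))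
    have hp := hpoly (fun i : Fin (ν+2) => x (idx i.val)) hu
    simp only [Fin.val_zero, Fin.val_last, Fin.coe_castSucc, Fin.val_succ] at hp
    have e0 : idx 0 = a - 1 := by simp [hidx]
    have eL : idx (ν+1) = b - 1 := by
      simp only [hidx]
      rw [if_neg (by omega : ¬ν + 1 = 0), if_neg (by omega : ¬ν + 1 = 1)]
      omega
    rw [e0, eL] at hp
    have e2 : idx 1 = a := by simp [hidx]
    have hbound : ∀ i : Fin (ν+1), d (x (idx i.val)) (x (idx (i.val+1)))
        ≤ (if i.val = 1 then ε else δ) := by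
      intro i
      have hi : i.val ≤ ν := Nat.lt_succ_iff.mp i.isLt
      by_cases h0 : i.val = 0
      · rw [h0, if_neg (by omega)]
        have e1 : idx 0 = a - 1 := e0
        have h := (hsmall (a-1) (by omega)).1
        rw [show a - 1 + 1 = a from by omega] at h
        rw [show (0:ℕ)+1 = 1 from rfl, e1, e2]
        exact h
      by_cases h1 : i.val = 1
      · rw [h1, if_pos rfl]
        have e3 : idx 2 = b - ν := by
          simp only [hidx]
          rw [if_neg (by omega : ¬(2:ℕ) = 0), if_neg (by omega : ¬(2:ℕ) = 1)]
          omega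
        rw [show (1:ℕ)+1 = 2 from rfl, e2, e3]
        exact hmin (b - ν) (by omega) (by omega)
      · rw [if_neg h1]
        have e4 : idx i.val = b - ν - 2 + i.val := by
          simp only [hidx]; rw [if_neg h0, if_neg h1]
        have e5 : idx (i.val+1) = b - ν - 2 + i.val + 1 := by
          simp only [hidx]
          rw [if_neg (by omega : ¬i.val + 1 = 0), if_neg (by omega : ¬i.val + 1 = 1)]
          omega
        have h := (hsmall (b - ν - 2 + i.val) (by omega)).1
        rw [e4, e5]
        exact h
    have hsum : ∑ i : Fin (ν+1), (if i.val = 1 then ε else δ) = ε + (ν:ℝ) * δ := by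
      have step : ∀ i : Fin (ν+1), (if i.val = 1 then ε else δ)
          = δ + (if i.val = 1 then ε - δ else 0) := by
        intro i; split_ifs <;> ring
      rw [Finset.sum_congr rfl fun i _ => step i, Finset.sum_add_distrib, Finset.sum_const,
        Fin.sum_univ_eq_sum_range (fun j => if j = 1 then ε - δ else 0) (ν+1),
        Finset.sum_ite_eq' (Finset.range (ν+1)) 1 (fun _ => ε - δ),
        if_pos (Finset.mem_range.mpr (by omega)), Finset.card_univ, Fintype.card_fin,
        nsmul_eq_mul]
      push_cast
      ring
    calc d (x (a-1)) (x (b-1))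
        ≤ ∑ i : Fin (ν+1), d (x (idx i.val)) (x (idx (i.val+1))) := hp
      _ ≤ ∑ i : Fin (ν+1), (if i.val = 1 then ε else δ) :=
          Finset.sum_le_sum fun i _ => hbound i
      _ = ε + (ν:ℝ) * δ := hsum
      _ ≤ ε + ((ν:ℝ)+1) * δ := by nlinarith
  · -- small gap: zigzag chain of small edges
    have hbn : b ≤ a + ν := by omega
    set s : ℕ := (ν + 1 - (b - a)) % 2 with hs
    set k : ℕ := (ν + 1 - (b - a) + s) / 2 with hk
    have hks : 2 * k = ν + 1 - (b - a) + s ∧ 1 ≤ k ∧ 2 * k ≤ ν - 1 ∧ s ≤ 1 := by omega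
    set idx : ℕ → ℕ := fun j => if j ≤ k then a - 1 - 2*j
      else if j ≤ 2*k+1 then a - 2*(2*k+1-j) else a + (j - (2*k+1)) + s with hidx
    have hmono : ∀ j j', j ≤ ν+1 → j' ≤ ν+1 → idx j = idx j' → j = j' := by
      intro j j' hj hj' h
      simp only [hidx] at h
      split_ifs at h <;> omega
    have hu : Function.Injective (fun i : Fin (ν+2) => x (idx i.val)) := by
      intro i i' h
      exact Fin.ext (hmono _ _ (Nat.lt_succ_iff.mp i.isLt) (Nat.lt_succ_iff.mp i'.isLt) (hinj h))
    have hp := hpoly (fun i : Fin (ν+2) => x (idx i.val)) hu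
    simp only [Fin.val_zero, Fin.val_last, Fin.coe_castSucc, Fin.val_succ] at hp
    have e0 : idx 0 = a - 1 := by
      simp only [hidx]; rw [if_pos (Nat.zero_le k)]; omega
    have eL : idx (ν+1) = b - 1 := by
      simp only [hidx]
      rw [if_neg (by omega : ¬ν + 1 ≤ k), if_neg (by omega : ¬ν + 1 ≤ 2*k+1)]
      omega
    rw [e0, eL] at hp
    have hedge : ∀ j, j ≤ ν → (N ≤ idx j ∧ N ≤ idx (j+1)) ∧
        (idx (j+1) = idx j + 1 ∨ idx (j+1) = idx j + 2 ∨ idx j = idx (j+1) + 2) := by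
      intro j hj
      simp only [hidx]
      split_ifs <;> omega
    have hbound : ∀ i : Fin (ν+1), d (x (idx i.val)) (x (idx (i.val+1))) ≤ δ := by
      intro i
      obtain ⟨⟨hn1, hn2⟩, h1 | h2 | h3⟩ := hedge i.val (Nat.lt_succ_iff.mp i.isLt)
      · rw [h1]; exact (hsmall _ hn1).1
      · rw [h2]; exact (hsmall _ hn1).2
      · rw [hsymm, h3]; exact (hsmall _ hn2).2
    calc d (x (a-1)) (x (b-1))
        ≤ ∑ i : Fin (ν+1), d (x (idx i.val)) (x (idx (i.val+1))) := hp
      _ ≤ ∑ _i : Fin (ν+1), δ := Finset.sum_le_sum fun i _ => hbound i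
      _ = ((ν:ℝ)+1) * δ := by
          rw [Finset.sum_const, Finset.card_univ, Fintype.card_fin, nsmul_eq_mul]
          push_cast; ring
      _ ≤ ε + ((ν:ℝ)+1) * δ := by linarith

theorem stmt_2 {X : Type*} (ν : ℕ) (hν : 0 < ν) (d : X → X → ℝ)
    (hX : NuGenMetric ν d) (x : ℕ → X) (hinj : Function.Injective x)
    (hd : Filter.Tendsto (fun n => d (x n) (x (n + 1)) + d (x n) (x (n + 2)))
      Filter.atTop (nhds 0))
    (m : X → X → ℝ) (hm0 : ∀ a b, 0 ≤ m a b)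
    (hml : ∀ p q : ℕ → ℕ, StrictMono p → StrictMono q →
      Filter.limsup (fun i => ENNReal.ofReal (m (x (p i)) (x (q i)))) Filter.atTop
        ≤ Filter.limsup (fun i => ENNReal.ofReal (d (x (p i)) (x (q i)))) Filter.atTop)
    (hsub : ∀ ε > (0 : ℝ), ∀ p q : ℕ → ℕ, StrictMono p → StrictMono q →
      Filter.limsup (fun i => ENNReal.ofReal (m (x (p i)) (x (q i)))) Filter.atTop
        ≤ ENNReal.ofReal ε →
      ∃ N, ∀ i ≥ N, d (x (p i + 1)) (x (q i + 1)) ≤ ε) :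
    IsKCauchy d x 1 := by
  classical
  have hpos : ∀ a b, 0 ≤ d a b := hX.1
  by_contra hC
  rw [IsKCauchy, ENNReal.tendsto_nhds_zero] at hC
  push_neg at hC
  obtain ⟨c, hc0, hcf⟩ := hC
  set c' := min c 1 with hc'
  have hc'0 : 0 < c' := lt_min hc0 one_pos
  have hc't : c' ≠ ⊤ := by
    refine ne_top_of_le_ne_top ?_ (min_le_right c 1)
    exact ENNReal.one_ne_top
  set ε := c'.toReal with hε'
  have hε : 0 < ε := ENNReal.toReal_pos hc'0.ne' hc't
  have hoε : ENNReal.ofReal ε = c' := ENNReal.ofReal_toReal hc't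
  -- frequently there is a bad pair
  have hfreq : ∀ M : ℕ, ∃ a, M ≤ a ∧ ∃ b, a < b ∧ ε < d (x a) (x b) := by
    intro M
    obtain ⟨n, hn, hs⟩ := (Filter.frequently_atTop.mp hcf) M
    have hlt : c' < ⨆ m' : ℕ, ENNReal.ofReal (d (x n) (x (n + 1 + m' * 1))) :=
      lt_of_le_of_lt (min_le_left c 1) hs
    obtain ⟨m', hm'⟩ := lt_iSup_iff.mp hlt
    refine ⟨n, hn, n + 1 + m' * 1, by omega, ?_⟩
    by_contra hle
    push_neg at hle
    have := ENNReal.ofReal_le_ofReal hle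
    rw [hoε] at this
    exact absurd hm' (not_lt.mpr this)
  -- small consecutive distances
  have hcons : ∀ δ : ℝ, 0 < δ → ∃ N, ∀ n, N ≤ n →
      d (x n) (x (n+1)) ≤ δ ∧ d (x n) (x (n+2)) ≤ δ := by
    intro δ hδ
    have h1 : ∀ᶠ n in atTop, d (x n) (x (n + 1)) + d (x n) (x (n + 2)) < δ :=
      hd.eventually_lt_const hδ
    obtain ⟨N, hN⟩ := eventually_atTop.mp h1
    refine ⟨N, fun n hn => ⟨?_, ?_⟩⟩
    · have := hN n hn; have := hpos (x n) (x (n+2)); linarith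
    · have := hN n hn; have := hpos (x n) (x (n+1)); linarith
  obtain ⟨N₀, hN₀⟩ := hcons ε hε
  -- minimal bad pair above any bound, with chain estimate
  have hpair : ∀ (M : ℕ) (δ : ℝ), 0 < δ → ∃ a b : ℕ, M ≤ a ∧ a < b ∧
      ε < d (x a) (x b) ∧ d (x (a-1)) (x (b-1)) ≤ ε + ((ν:ℝ)+1) * δ := by
    intro M δ hδ
    obtain ⟨N, hN⟩ := hcons δ hδ
    obtain ⟨a, ha, b₀, hab₀, hdb₀⟩ := hfreq (max (max M (N + 2*ν + 4)) N₀)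
    have hex : ∃ b, a < b ∧ ε < d (x a) (x b) := ⟨b₀, hab₀, hdb₀⟩
    set b := Nat.find hex with hb
    obtain ⟨hab1, hdb⟩ := Nat.find_spec hex
    rw [← hb] at hab1 hdb
    have hmin : ∀ c2, a < c2 → c2 < b → d (x a) (x c2) ≤ ε := by
      intro c2 h1 h2
      have h3 := Nat.find_min hex h2
      push_neg at h3
      exact h3 h1
    have hb3 : a + 3 ≤ b := by
      rcases Nat.lt_or_ge b (a+3) with h | h
      · exfalso
        have hsm := hN₀ a (by omega)
        have hb1 : b = a + 1 ∨ b = a + 2 := by omega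
        rcases hb1 with h' | h'
        · rw [h'] at hdb; exact absurd hdb (not_lt.mpr hsm.1)
        · rw [h'] at hdb; exact absurd hdb (not_lt.mpr hsm.2)
      · exact h
    exact ⟨a, b, by omega, by omega, hdb,
      chain_bound hν hX hinj hε hδ hN (by omega) hb3 hmin⟩
  have hstep : ∀ (i M : ℕ), ∃ ab : ℕ × ℕ, M ≤ ab.1 ∧ ab.1 < ab.2 ∧
      ε < d (x ab.1) (x ab.2) ∧
      d (x (ab.1-1)) (x (ab.2-1)) ≤ ε + ((ν:ℝ)+1) * (1/((i:ℝ)+1)) := by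
    intro i M
    obtain ⟨a, b, h1, h2, h3, h4⟩ := hpair M (1/((i:ℝ)+1)) (by positivity)
    exact ⟨(a, b), h1, h2, h3, h4⟩
  let F : ℕ → ℕ × ℕ := fun n => Nat.rec (motive := fun _ => ℕ × ℕ)
    (Classical.choose (hstep 0 1))
    (fun i prev => Classical.choose (hstep (i+1) (prev.2 + 1))) n
  have hF0 : (1:ℕ) ≤ (F 0).1 ∧ (F 0).1 < (F 0).2 ∧ ε < d (x (F 0).1) (x (F 0).2) ∧
      d (x ((F 0).1-1)) (x ((F 0).2-1)) ≤ ε + ((ν:ℝ)+1) * (1/(((0:ℕ):ℝ)+1)) :=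
    Classical.choose_spec (hstep 0 1)
  have hFS : ∀ i : ℕ, (F i).2 + 1 ≤ (F (i+1)).1 ∧ (F (i+1)).1 < (F (i+1)).2 ∧
      ε < d (x (F (i+1)).1) (x (F (i+1)).2) ∧
      d (x ((F (i+1)).1-1)) (x ((F (i+1)).2-1))
        ≤ ε + ((ν:ℝ)+1) * (1/(((i+1:ℕ):ℝ)+1)) :=
    fun i => Classical.choose_spec (hstep (i+1) ((F i).2 + 1))
  have hF1 : ∀ i, 1 ≤ (F i).1 := by
    intro i
    cases i with
    | zero => exact hF0.1
    | succ n => have := (hFS n).1; omega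
  have hFlt : ∀ i, (F i).1 < (F i).2 := by
    intro i
    cases i with
    | zero => exact hF0.2.1
    | succ n => exact (hFS n).2.1
  have hFd : ∀ i, ε < d (x (F i).1) (x (F i).2) := by
    intro i
    cases i with
    | zero => exact hF0.2.2.1
    | succ n => exact (hFS n).2.2.1
  have hFb : ∀ i : ℕ, d (x ((F i).1-1)) (x ((F i).2-1))
      ≤ ε + ((ν:ℝ)+1) * (1/((i:ℝ)+1)) := by
    intro i
    cases i with
    | zero => simpa using hF0.2.2.2
    | succ n => exact (hFS n).2.2.2
  set p : ℕ → ℕ := fun i => (F i).1 - 1 with hpdef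
  set q : ℕ → ℕ := fun i => (F i).2 - 1 with hqdef
  have hpm : StrictMono p := by
    apply strictMono_nat_of_lt_succ
    intro i
    have h1 := (hFS i).1
    have h2 := hFlt i
    have h3 := hF1 i
    simp only [hpdef]
    omega
  have hqm : StrictMono q := by
    apply strictMono_nat_of_lt_succ
    intro i
    have h1 := (hFS i).1
    have h2 := hFlt (i+1)
    simp only [hqdef]
    omega
  have hlim : Filter.limsup (fun i => ENNReal.ofReal (d (x (p i)) (x (q i)))) atTop
      ≤ ENNReal.ofReal ε := by
    have htend : Tendsto (fun i : ℕ => ENNReal.ofReal (ε + ((ν:ℝ)+1) * (1/((i:ℝ)+1))))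
        atTop (nhds (ENNReal.ofReal ε)) := by
      apply ENNReal.tendsto_ofReal
      have h1 : Tendsto (fun i : ℕ => (1:ℝ)/((i:ℝ)+1)) atTop (nhds 0) :=
        tendsto_one_div_add_atTop_nhds_zero_nat
      have h2 := h1.const_mul ((ν:ℝ)+1)
      have h3 := tendsto_const_nhds.add h2 (α := ℕ) (f := fun _ : ℕ => ε)
      simpa using h3
    calc Filter.limsup (fun i => ENNReal.ofReal (d (x (p i)) (x (q i)))) atTop
        ≤ Filter.limsup (fun i : ℕ => ENNReal.ofReal (ε + ((ν:ℝ)+1) * (1/((i:ℝ)+1)))) atTop := by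
          exact Filter.limsup_le_limsup
            (Filter.Eventually.of_forall fun i => ENNReal.ofReal_le_ofReal (hFb i))
      _ = ENNReal.ofReal ε := htend.limsup_eq
  have hml' := le_trans (hml p q hpm hqm) hlim
  obtain ⟨N, hN⟩ := hsub ε hε p q hpm hqm hml'
  have h1 := hN N (le_refl N)
  have e1 : p N + 1 = (F N).1 := by
    have := hF1 N; simp only [hpdef]; omega
  have e2 : q N + 1 = (F N).2 := by
    have := hF1 N; have := hFlt N; simp only [hqdef]; omega
  rw [e1, e2] at h1
  exact absurd (hFd N) (not_lt.mpr h1)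
end

section
/- Let X be a set, d : X × X → [0,∞), {x_n} a sequence in X, and m : X × X → [0,∞). The following are equivalent: (i) for every ε > 0 there exist δ > 0 and N ∈ ℕ such that for all p, q ≥ N, m(x_p, x_q) < ε + δ implies d(x_{p+1}, x_{q+1}) ≤ ε; (ii) for every ε > 0 and for any two subsequences {x_{p_i}}, {x_{q_i}}, if limsup_{i→∞} m(x_{p_i}, x_{q_i}) ≤ ε then there exists N with d(x_{p_i+1}, x_{q_i+1}) ≤ ε for all i ≥ N. -/
/-!
For a fixed `ε`, failure of (i) produces, for every `i`, indices `p, q` beyond any prescribed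
bound with `m(x_p, x_q) < ε + 1/(i+1)` but `d(x_{p+1}, x_{q+1}) > ε`; choosing them recursively
beyond all previous ones gives two subsequences along which the `limsup` of `m` is at most `ε`
while the conclusion of (ii) fails at every index. Conversely, `limsup < ε + δ` forces
`m(x_{p_i}, x_{q_i}) < ε + δ` eventually, and `p_i, q_i ≥ N` eventually since both are strictly
increasing.
-/

open Filter Topology

lemma exists_strictMono_pair_of_forall_exists_ge {Q : ℕ → ℕ → ℕ → Prop}
    (h : ∀ i N, ∃ p ≥ N, ∃ q ≥ N, Q i p q) :
    ∃ p q : ℕ → ℕ, StrictMono p ∧ StrictMono q ∧ ∀ i, Q i (p i) (q i) := by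
  choose P hP Q' hQ' hQ using h
  -- `N i` is the lower bound imposed at step `i`: one more than the previously chosen pair.
  let N : ℕ → ℕ := fun i => Nat.rec 0 (fun i n => max (P i n) (Q' i n) + 1) i
  refine ⟨fun i => P i (N i), fun i => Q' i (N i), strictMono_nat_of_lt_succ fun i => ?_,
    strictMono_nat_of_lt_succ fun i => ?_, fun i => hQ i (N i)⟩
  · exact (Nat.lt_succ_of_le (le_max_left _ _)).trans_le (hP (i + 1) (N (i + 1)))
  · exact (Nat.lt_succ_of_le (le_max_right _ _)).trans_le (hQ' (i + 1) (N (i + 1)))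

lemma limsup_ofReal_le_of_lt_add_one_div {u : ℕ → ℝ} {ε : ℝ}
    (h : ∀ i, u i < ε + 1 / (i + 1)) :
    limsup (fun i => ENNReal.ofReal (u i)) atTop ≤ ENNReal.ofReal ε := by
  have htendsto : Tendsto (fun i : ℕ => ENNReal.ofReal (ε + 1 / (i + 1))) atTop
      (nhds (ENNReal.ofReal ε)) := by
    apply ENNReal.tendsto_ofReal
    simpa using (tendsto_const_nhds (x := ε)).add tendsto_one_div_add_atTop_nhds_zero_nat
  calc limsup (fun i => ENNReal.ofReal (u i)) atTop
      ≤ limsup (fun i : ℕ => ENNReal.ofReal (ε + 1 / (i + 1))) atTop :=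
        limsup_le_limsup (.of_forall fun i => ENNReal.ofReal_le_ofReal (h i).le)
    _ = ENNReal.ofReal ε := htendsto.limsup_eq

section

variable {a : ℕ → ℕ → ℝ} {P : ℕ → ℕ → Prop} {ε : ℝ}

lemma eventually_of_limsup_ofReal_le {δ : ℝ} {N : ℕ} (hε : 0 ≤ ε) (hδ : 0 < δ)
    (h : ∀ p ≥ N, ∀ q ≥ N, a p q < ε + δ → P p q) {p q : ℕ → ℕ}
    (hp : StrictMono p) (hq : StrictMono q)
    (hlimsup : limsup (fun i => ENNReal.ofReal (a (p i) (q i))) atTop ≤ ENNReal.ofReal ε) :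
    ∀ᶠ i in atTop, P (p i) (q i) := by
  have hlt : limsup (fun i => ENNReal.ofReal (a (p i) (q i))) atTop
      < ENNReal.ofReal (ε + δ) :=
    hlimsup.trans_lt ((ENNReal.ofReal_lt_ofReal_iff (by linarith)).2 (by linarith))
  filter_upwards [eventually_lt_of_limsup_lt hlt, hp.tendsto_atTop.eventually_ge_atTop N,
    hq.tendsto_atTop.eventually_ge_atTop N] with i hi hpi hqi
  exact h _ hpi _ hqi ((ENNReal.ofReal_lt_ofReal_iff (by linarith)).1 hi)

lemma exists_limsup_ofReal_le_forall_not
    (h : ∀ δ > 0, ∀ N : ℕ, ∃ p ≥ N, ∃ q ≥ N, a p q < ε + δ ∧ ¬ P p q) :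
    ∃ p q : ℕ → ℕ, StrictMono p ∧ StrictMono q ∧
      limsup (fun i => ENNReal.ofReal (a (p i) (q i))) atTop ≤ ENNReal.ofReal ε ∧
      ∀ i, ¬ P (p i) (q i) := by
  obtain ⟨p, q, hp, hq, hpq⟩ := exists_strictMono_pair_of_forall_exists_ge
    fun (i : ℕ) N => h (1 / (i + 1)) (by positivity) N
  exact ⟨p, q, hp, hq, limsup_ofReal_le_of_lt_add_one_div fun i => (hpq i).1,
    fun i => (hpq i).2⟩

theorem exists_pos_forall_lt_add_iff_forall_limsup_ofReal_le (hε : 0 ≤ ε) :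
    (∃ δ > 0, ∃ N : ℕ, ∀ p ≥ N, ∀ q ≥ N, a p q < ε + δ → P p q) ↔
      ∀ p q : ℕ → ℕ, StrictMono p → StrictMono q →
        limsup (fun i => ENNReal.ofReal (a (p i) (q i))) atTop ≤ ENNReal.ofReal ε →
        ∀ᶠ i in atTop, P (p i) (q i) := by
  refine ⟨fun ⟨δ, hδ, N, h⟩ p q hp hq => eventually_of_limsup_ofReal_le hε hδ h hp hq, ?_⟩
  contrapose!
  intro h
  obtain ⟨p, q, hp, hq, hlimsup, hnot⟩ := exists_limsup_ofReal_le_forall_not h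
  exact ⟨p, q, hp, hq, hlimsup, .of_forall hnot⟩

end

theorem stmt_3_general {X : Type*} (d m : X → X → ℝ)
    (x : ℕ → X) :
    (∀ ε > (0 : ℝ), ∃ δ > (0 : ℝ), ∃ N : ℕ, ∀ p ≥ N, ∀ q ≥ N,
      m (x p) (x q) < ε + δ → d (x (p + 1)) (x (q + 1)) ≤ ε) ↔
    (∀ ε > (0 : ℝ), ∀ p q : ℕ → ℕ, StrictMono p → StrictMono q →
      Filter.limsup (fun i => ENNReal.ofReal (m (x (p i)) (x (q i)))) Filter.atTop
        ≤ ENNReal.ofReal ε →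
      ∃ N, ∀ i ≥ N, d (x (p i + 1)) (x (q i + 1)) ≤ ε) := by
  refine forall₂_congr fun ε hε => ?_
  simpa only [← eventually_atTop] using
    exists_pos_forall_lt_add_iff_forall_limsup_ofReal_le
      (a := fun p q => m (x p) (x q)) (P := fun p q => d (x (p + 1)) (x (q + 1)) ≤ ε) hε.le

theorem stmt_3 {X : Type*} (d m : X → X → ℝ)
    (hd0 : ∀ a b, 0 ≤ d a b) (hm0 : ∀ a b, 0 ≤ m a b) (x : ℕ → X) :
    (∀ ε > (0 : ℝ), ∃ δ > (0 : ℝ), ∃ N : ℕ, ∀ p ≥ N, ∀ q ≥ N,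
      m (x p) (x q) < ε + δ → d (x (p + 1)) (x (q + 1)) ≤ ε) ↔
    (∀ ε > (0 : ℝ), ∀ p q : ℕ → ℕ, StrictMono p → StrictMono q →
      Filter.limsup (fun i => ENNReal.ofReal (m (x (p i)) (x (q i)))) Filter.atTop
        ≤ ENNReal.ofReal ε →
      ∃ N, ∀ i ≥ N, d (x (p i + 1)) (x (q i + 1)) ≤ ε) :=
  stmt_3_general d m x
end

section
/- Let (X,d) be a ν-generalized metric space and T : X → X a map such that d(T^n x, T^{n+1} x) → 0 for some x ∈ X. Then there exists k ∈ ℕ such that either the Picard iterates T^n x for n ≥ k are pairwise distinct, or they are all equal. -/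
open Filter Topology

/-!
If the orbit of `x` never repeats, its points are pairwise distinct. If it repeats, it is
eventually periodic, so the consecutive distances `d(Tⁿx, Tⁿ⁺¹x)` are eventually periodic in `n`;
a periodic sequence tending to `0` vanishes, so the orbit reaches a fixed point of `T`.
-/

namespace Function

variable {α : Type*} {T : α → α} {x : α}

theorem iterate_add_mul_eq_of_iterate_add_eq {a p m : ℕ} (h : T^[a + p] x = T^[a] x)
    (hm : a ≤ m) (j : ℕ) : T^[m + j * p] x = T^[m] x := by
  have hper : IsPeriodicPt T p (T^[a] x) := by
    rwa [IsPeriodicPt, IsFixedPt, ← iterate_add_apply, add_comm]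
  obtain ⟨i, rfl⟩ := Nat.exists_eq_add_of_le hm
  rw [show a + i + j * p = p * j + i + a by ring, iterate_add_apply, iterate_add_apply,
    add_comm a, iterate_add_apply]
  exact ((hper.apply_iterate i).mul_const j).eq

theorem iterate_eq_of_isFixedPt_iterate {a n : ℕ} (h : IsFixedPt T (T^[a] x)) (hn : a ≤ n) :
    T^[n] x = T^[a] x := by
  obtain ⟨i, rfl⟩ := Nat.exists_eq_add_of_le hn
  rw [add_comm, iterate_add_apply]
  exact (h.iterate i).eq

end Function

theorem eq_of_tendsto_of_add_mul_eq {α : Type*} [TopologicalSpace α] [T2Space α] {f : ℕ → α}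
    {l : α} {m p : ℕ} (hf : Tendsto f atTop (𝓝 l)) (hp : 0 < p)
    (hper : ∀ j, f (m + j * p) = f m) : f m = l := by
  have hsub : Tendsto (fun j : ℕ => m + j * p) atTop atTop :=
    tendsto_atTop_mono (fun j => show j ≤ m + j * p by nlinarith) tendsto_id
  have hconst := hf.comp hsub
  simp only [Function.comp_def, hper] at hconst
  exact tendsto_nhds_unique tendsto_const_nhds hconst

theorem stmt_4_general {X : Type*} (ν : ℕ) (d : X → X → ℝ)
    (hX : NuGenMetric ν d) (T : X → X) (x : X)
    (hd : Filter.Tendsto (fun n => d (T^[n] x) (T^[n + 1] x)) Filter.atTop (nhds 0)) :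
    ∃ k : ℕ, (∀ n ≥ k, ∀ n' ≥ k, n ≠ n' → T^[n] x ≠ T^[n'] x) ∨
      (∀ n ≥ k, ∀ n' ≥ k, T^[n] x = T^[n'] x) := by
  by_cases hrep : ∃ a b : ℕ, a < b ∧ T^[a] x = T^[b] x
  · obtain ⟨a, b, hab, hrep⟩ := hrep
    obtain ⟨p, hp, rfl⟩ : ∃ p, 0 < p ∧ b = a + p := ⟨b - a, by omega, by omega⟩
    have hdist : d (T^[a] x) (T^[a + 1] x) = 0 := by
      refine eq_of_tendsto_of_add_mul_eq hd hp fun j => ?_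
      rw [Function.iterate_add_mul_eq_of_iterate_add_eq hrep.symm le_rfl,
        add_right_comm, Function.iterate_add_mul_eq_of_iterate_add_eq hrep.symm a.le_succ]
    have hfix : Function.IsFixedPt T (T^[a] x) := by
      rw [Function.IsFixedPt, ← Function.iterate_succ_apply' T a x, ← (hX.2.1 _ _).mp hdist]
    refine ⟨a, Or.inr fun n hn n' hn' => ?_⟩
    rw [Function.iterate_eq_of_isFixedPt_iterate hfix hn,
      Function.iterate_eq_of_isFixedPt_iterate hfix hn']
  · push Not at hrep
    exact ⟨0, Or.inl fun n _ n' _ hne =>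
      hne.lt_or_gt.elim (hrep n n') fun hlt heq => hrep n' n hlt heq.symm⟩

theorem stmt_4 {X : Type*} (ν : ℕ) (hν : 0 < ν) (d : X → X → ℝ)
    (hX : NuGenMetric ν d) (T : X → X) (x : X)
    (hd : Filter.Tendsto (fun n => d (T^[n] x) (T^[n + 1] x)) Filter.atTop (nhds 0)) :
    ∃ k : ℕ, (∀ n ≥ k, ∀ n' ≥ k, n ≠ n' → T^[n] x ≠ T^[n'] x) ∨
      (∀ n ≥ k, ∀ n' ≥ k, T^[n] x = T^[n'] x) :=
  stmt_4_general ν d hX T x hd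
end

section
/- Let (X,d) be a ν-generalized metric space, T : X → X, m : X × X → [0,∞), and x ∈ X. Suppose: (i) for every ε > 0 there exist δ > 0 and N such that for all p, q ≥ N, m(T^p x, T^q x) < δ + ε implies d(T^{p+1} x, T^{q+1} x) ≤ ε; (ii) for any two subsequences {T^{p_i} x}, {T^{q_i} x} of the orbit, limsup_i m(T^{p_i}x, T^{q_i}x) ≤ limsup_i d(T^{p_i}x, T^{q_i}x); (iii) d(T^n x, T^{n+1} x) + d(T^n x, T^{n+2} x) → 0. Then the sequence {T^n x} is Cauchy. -/
open Filter Topology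

/-!
Write `xₙ = Tⁿ x`. On a non-injective orbit, `d xₙ xₙ₊₁ → 0` forces a periodic point to be fixed,
so the orbit is eventually constant. On an injective orbit the polygon inequality applies to any
`ν + 2` orbit points, and chaining steps of index length `1` and `2` shows that points at most `ν
+ 1` apart are eventually close. If the orbit were not Cauchy, for infinitely many `p` there would
be a first `q` with `d xₚ₊₁ x_{q+1} > ε`; this `q` lies more than `ν` beyond `p`, and the chain
`xₚ, xₚ₊₁, x_{q+1-ν}, …, x_q` gives `d xₚ x_q ≤ ε + δ / 2`. Condition (ii) along these pairs makes
`m xₚ x_q < δ + ε` for some of them, and then (i) gives `d xₚ₊₁ x_{q+1} ≤ ε`, a contradiction.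
-/

open Function Finset

lemma exists_strictMono_pair {P : ℕ → ℕ → Prop} (h : ∀ K, ∃ p q, K ≤ p ∧ p ≤ q ∧ P p q) :
    ∃ φ ψ : ℕ → ℕ, StrictMono φ ∧ StrictMono ψ ∧ ∀ i, P (φ i) (ψ i) := by
  choose p q hKp hpq hP using h
  obtain ⟨φ, hφ, hpφ⟩ := strictMono_subseq_of_tendsto_atTop (tendsto_atTop_mono hKp tendsto_id)
  have hqφ : Tendsto (q ∘ φ) atTop atTop :=
    tendsto_atTop_mono (fun i => (hφ.id_le i).trans ((hKp _).trans (hpq _))) tendsto_id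
  obtain ⟨ψ, hψ, hqφψ⟩ := strictMono_subseq_of_tendsto_atTop hqφ
  exact ⟨p ∘ φ ∘ ψ, q ∘ φ ∘ ψ, hpφ.comp hψ, hqφψ, fun i => hP _⟩

lemma exists_zigzag {j e : ℕ} (hj : 0 < j) (hje : j ≤ e) :
    ∃ v : ℕ → ℕ, v 0 = 0 ∧ v e = j ∧ Set.InjOn v (Set.Iic e) ∧
      ∀ t < e, v (t + 1) ≤ v t + 2 ∧ v t ≤ v (t + 1) + 2 := by
  -- climb `0, 1, …, j - 1`, overshoot along odd offsets above `j`, come back along even ones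
  refine ⟨fun t => if t < j then t else if e - j ≤ 2 * (t - j) then j + 2 * (e - t)
    else j + 2 * (t - j) + 1, ?_, ?_, ?_, ?_⟩
  · simp [hj]
  · simp only; split_ifs <;> omega
  · intro s hs t ht h
    simp only [Set.mem_Iic] at hs ht h
    split_ifs at h <;> omega
  · intro t ht
    simp only
    split_ifs <;> omega

namespace NuGenMetric

variable {ν : ℕ} {X : Type*} {d : X → X → ℝ}

lemma dist_le_sum_of_injOn (hd : NuGenMetric ν d) {w : ℕ → X}
    (hw : Set.InjOn w (Set.Iic (ν + 1))) :
    d (w 0) (w (ν + 1)) ≤ ∑ i ∈ range (ν + 1), d (w i) (w (i + 1)) := by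
  have hinj : Injective fun i : Fin (ν + 2) => w i :=
    fun a b hab => Fin.ext (hw (by simp [Nat.lt_succ_iff.1 a.isLt])
      (by simp [Nat.lt_succ_iff.1 b.isLt]) hab)
  simpa [Fin.sum_univ_eq_sum_range (fun i => d (w i) (w (i + 1)))] using hd.2.2.2 _ hinj

variable {u : ℕ → X} {M : ℕ} {β : ℝ}

lemma dist_le_of_index_near (hd : NuGenMetric ν d)
    (hstep : ∀ a ≥ M, d (u a) (u (a + 1)) ≤ β ∧ d (u a) (u (a + 2)) ≤ β)
    {a b : ℕ} (ha : M ≤ a) (hb : M ≤ b) (hab : b ≤ a + 2) (hba : a ≤ b + 2) (hne : a ≠ b) :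
    d (u a) (u b) ≤ β := by
  rcases lt_or_gt_of_ne hne with h | h
  · obtain rfl | rfl : b = a + 1 ∨ b = a + 2 := by omega
    exacts [(hstep a ha).1, (hstep a ha).2]
  · obtain rfl | rfl : a = b + 1 ∨ a = b + 2 := by omega
    · rw [hd.2.2.1]; exact (hstep b hb).1
    · rw [hd.2.2.1]; exact (hstep b hb).2

lemma dist_add_le_of_steps_le (hd : NuGenMetric ν d) (hu : Injective u)
    (hstep : ∀ a ≥ M, d (u a) (u (a + 1)) ≤ β ∧ d (u a) (u (a + 2)) ≤ β)
    {n j : ℕ} (hn : M ≤ n) (hj : 0 < j) (hjν : j ≤ ν + 1) :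
    d (u n) (u (n + j)) ≤ (ν + 1) * β := by
  obtain ⟨v, hv0, hve, hvinj, hvstep⟩ := exists_zigzag hj hjν
  have hw : Set.InjOn (fun t => u (n + v t)) (Set.Iic (ν + 1)) :=
    hu.comp_injOn fun s hs t ht h => hvinj hs ht (Nat.add_left_cancel h)
  have hedge : ∀ t ∈ range (ν + 1), d (u (n + v t)) (u (n + v (t + 1))) ≤ β := by
    intro t ht
    rw [mem_range] at ht
    have hne : v t ≠ v (t + 1) := fun h => by
      have := hvinj (Set.mem_Iic.2 ht.le) (Set.mem_Iic.2 ht) h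
      omega
    have := hvstep t ht
    exact hd.dist_le_of_index_near hstep (by omega) (by omega) (by omega) (by omega) (by omega)
  calc d (u n) (u (n + j)) = d (u (n + v 0)) (u (n + v (ν + 1))) := by rw [hv0, hve, add_zero]
    _ ≤ ∑ t ∈ range (ν + 1), d (u (n + v t)) (u (n + v (t + 1))) := hd.dist_le_sum_of_injOn hw
    _ ≤ (range (ν + 1)).card • β := sum_le_card_nsmul _ _ _ hedge
    _ = (ν + 1) * β := by simp

lemma exists_pair_of_dist_gt (hd : NuGenMetric ν d) (hν : 0 < ν) (hu : Injective u)
    (hstep : ∀ a ≥ M, d (u a) (u (a + 1)) ≤ β ∧ d (u a) (u (a + 2)) ≤ β)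
    {ε : ℝ} (hβε : (ν + 1) * β < ε) {p r : ℕ} (hp : M ≤ p) (hpr : p + 1 < r)
    (hr : ε < d (u (p + 1)) (u r)) :
    ∃ q, p + ν < q ∧ ε < d (u (p + 1)) (u (q + 1)) ∧ d (u p) (u q) ≤ ν * β + ε := by
  classical
  -- `q + 1` will be the first index after `p + 1` whose point is `ε`-far from `u (p + 1)`
  have hex : ∃ r, p + 1 < r ∧ ε < d (u (p + 1)) (u r) := ⟨r, hpr, hr⟩
  obtain ⟨hlt, hfar⟩ := Nat.find_spec hex
  have hclose : ∀ s, p + 1 < s → s < Nat.find hex → d (u (p + 1)) (u s) ≤ ε :=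
    fun s h₁ h₂ => not_lt.1 fun h => Nat.find_min hex h₂ ⟨h₁, h⟩
  have hgap : p + ν + 2 < Nat.find hex := by
    by_contra! h
    have := hd.dist_add_le_of_steps_le hu hstep (n := p + 1) (j := Nat.find hex - (p + 1))
      (by omega) (by omega) (by omega)
    rw [Nat.add_sub_cancel' hlt.le] at this
    linarith
  obtain ⟨q, hq⟩ : ∃ q, Nat.find hex = q + 1 := ⟨Nat.find hex - 1, by omega⟩
  rw [hq] at hfar hclose hgap
  refine ⟨q, by omega, hfar, ?_⟩
  obtain ⟨μ, rfl⟩ : ∃ μ, ν = μ + 1 := ⟨ν - 1, by omega⟩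
  -- the chain `p, p + 1, q - μ, q - μ + 1, …, q`, whose second edge is the only long one
  let w : ℕ → ℕ := fun | 0 => p | 1 => p + 1 | t + 2 => q - μ + t
  have hw : Set.InjOn (fun t => u (w t)) (Set.Iic (μ + 1 + 1)) := by
    refine hu.comp_injOn fun s hs t ht h => ?_
    simp only [Set.mem_Iic] at hs ht
    rcases s with _ | _ | s <;> rcases t with _ | _ | t <;> simp only [w] at h <;> omega
  have hchain := hd.dist_le_sum_of_injOn hw
  rw [sum_range_succ', sum_range_succ'] at hchain
  have hlong : d (u (p + 1)) (u (q - μ + 0)) ≤ ε := hclose _ (by omega) (by omega)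
  have htail : ∑ k ∈ range μ, d (u (q - μ + k)) (u (q - μ + (k + 1))) ≤ μ * β := by
    refine (sum_le_card_nsmul _ _ β fun k _ => (hstep (q - μ + k) (by omega)).1).trans ?_
    simp
  have hend : q - μ + μ = q := Nat.sub_add_cancel (by omega)
  simp only [w, hend] at hchain
  have hfirst := (hstep p hp).1
  push_cast
  linarith

end NuGenMetric

section Sequence

variable {X : Type*} {d m : X → X → ℝ} {u : ℕ → X}

lemma isKCauchy_one_of_forall_dist_le
    (h : ∀ r > 0, ∃ N, ∀ n ≥ N, ∀ k, d (u n) (u (n + 1 + k)) ≤ r) : IsKCauchy d u 1 := by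
  refine ENNReal.tendsto_nhds_zero.2 fun ε hε => ?_
  obtain ⟨r, -, hr0, hrε⟩ := ENNReal.lt_iff_exists_real_btwn.1 hε
  obtain ⟨N, hN⟩ := h r (ENNReal.ofReal_pos.1 hr0)
  filter_upwards [eventually_ge_atTop N] with n hn
  exact iSup_le fun k => (ENNReal.ofReal_le_ofReal (by simpa using hN n hn k)).trans hrε.le

lemma not_forall_exists_expanding_pair {ε δ : ℝ} {N : ℕ} (hε : 0 < ε) (hδ : 0 < δ)
    (h1 : ∀ p ≥ N, ∀ q ≥ N, m (u p) (u q) < δ + ε → d (u (p + 1)) (u (q + 1)) ≤ ε)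
    (h2 : ∀ p q : ℕ → ℕ, StrictMono p → StrictMono q →
      limsup (fun i => ENNReal.ofReal (m (u (p i)) (u (q i)))) atTop
        ≤ limsup (fun i => ENNReal.ofReal (d (u (p i)) (u (q i)))) atTop) :
    ¬ ∀ K, ∃ p q, K ≤ p ∧ p ≤ q ∧
      ε < d (u (p + 1)) (u (q + 1)) ∧ d (u p) (u q) ≤ ε + δ / 2 := by
  intro h
  obtain ⟨φ, ψ, hφ, hψ, hP⟩ := exists_strictMono_pair h
  have hlim : limsup (fun i => ENNReal.ofReal (m (u (φ i)) (u (ψ i)))) atTop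
      < ENNReal.ofReal (δ + ε) :=
    calc _ ≤ limsup (fun i => ENNReal.ofReal (d (u (φ i)) (u (ψ i)))) atTop := h2 φ ψ hφ hψ
      _ ≤ ENNReal.ofReal (ε + δ / 2) := limsup_le_of_le (by isBoundedDefault)
          (Eventually.of_forall fun i => ENNReal.ofReal_le_ofReal (hP i).2)
      _ < ENNReal.ofReal (δ + ε) := ENNReal.ofReal_lt_ofReal_iff'.2 ⟨by linarith, by linarith⟩
  obtain ⟨i, hi, hiN⟩ := ((eventually_lt_of_limsup_lt hlim).and (eventually_ge_atTop N)).exists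
  have := h1 (φ i) (hiN.trans (hφ.id_le i)) (ψ i) (hiN.trans (hψ.id_le i))
    (ENNReal.ofReal_lt_ofReal_iff'.1 hi).1
  linarith [(hP i).1]

theorem NuGenMetric.forall_dist_le_of_injective {ν : ℕ} (hd : NuGenMetric ν d) (hν : 0 < ν)
    (hu : Injective u)
    (h1 : ∀ ε > (0 : ℝ), ∃ δ > (0 : ℝ), ∃ N : ℕ, ∀ p ≥ N, ∀ q ≥ N,
      m (u p) (u q) < δ + ε → d (u (p + 1)) (u (q + 1)) ≤ ε)
    (h2 : ∀ p q : ℕ → ℕ, StrictMono p → StrictMono q →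
      limsup (fun i => ENNReal.ofReal (m (u (p i)) (u (q i)))) atTop
        ≤ limsup (fun i => ENNReal.ofReal (d (u (p i)) (u (q i)))) atTop)
    (hstep₁ : Tendsto (fun n => d (u n) (u (n + 1))) atTop (𝓝 0))
    (hstep₂ : Tendsto (fun n => d (u n) (u (n + 2))) atTop (𝓝 0)) :
    ∀ r > 0, ∃ N, ∀ n ≥ N, ∀ k, d (u n) (u (n + 1 + k)) ≤ r := by
  by_contra! ⟨ε, hε, hfar⟩
  obtain ⟨δ, hδ, N, hN⟩ := h1 ε hε
  set β := min ε δ / (2 * (ν + 1))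
  have hβ : 0 < β := by positivity
  have hνβ : (ν + 1) * β = min ε δ / 2 := by simp only [β]; field_simp
  obtain ⟨M, hM⟩ := eventually_atTop.1 <|
    (hstep₁.eventually (ge_mem_nhds hβ)).and (hstep₂.eventually (ge_mem_nhds hβ))
  refine not_forall_exists_expanding_pair hε hδ hN h2 fun K => ?_
  obtain ⟨n, hn, k, hk⟩ := hfar (K + M + 1)
  obtain ⟨p, rfl⟩ : ∃ p, n = p + 1 := ⟨n - 1, by omega⟩
  obtain ⟨q, hpq, hfar', hclose⟩ := hd.exists_pair_of_dist_gt hν hu hM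
    (by linarith [min_le_left ε δ]) (by omega) (by omega) hk
  refine ⟨p, q, by omega, by omega, hfar', hclose.trans ?_⟩
  linarith [min_le_right ε δ]

end Sequence

lemma Function.exists_iterate_eq_of_not_injective {X : Type*} {d : X → X → ℝ}
    (hd : ∀ a b, d a b = 0 ↔ a = b) {T : X → X} {x : X}
    (hstep : Tendsto (fun n => d (T^[n] x) (T^[n + 1] x)) atTop (𝓝 0))
    (hx : ¬ Injective fun n => T^[n] x) : ∃ N, ∀ n ≥ N, T^[n] x = T^[N] x := by
  obtain ⟨i, j, hij, hlt⟩ : ∃ i j, T^[i] x = T^[j] x ∧ i < j := by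
    obtain ⟨i, j, hij, hne⟩ := not_injective_iff.1 hx
    rcases hne.lt_or_gt with h | h
    exacts [⟨i, j, hij, h⟩, ⟨j, i, hij.symm, h⟩]
  have hper : IsPeriodicPt T (j - i) (T^[i] x) := by
    rw [IsPeriodicPt, IsFixedPt, ← iterate_add_apply, Nat.sub_add_cancel hlt.le, hij]
  have hconst : ∀ t, d (T^[(j - i) * t + i] x) (T^[(j - i) * t + i + 1] x)
      = d (T^[i] x) (T (T^[i] x)) := fun t => by
    rw [iterate_succ_apply', iterate_add_apply, (hper.mul_const t).eq]
  have htend : Tendsto (fun t => (j - i) * t + i) atTop atTop :=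
    tendsto_atTop_mono (fun t => le_add_right (Nat.le_mul_of_pos_left t (by omega))) tendsto_id
  have hfix : IsFixedPt T (T^[i] x) :=
    ((hd _ _).1 (tendsto_const_nhds_iff.1 ((hstep.comp htend).congr hconst))).symm
  exact ⟨i, fun n hn => by
    rw [← Nat.sub_add_cancel hn, iterate_add_apply, iterate_fixed hfix]⟩

theorem stmt_5_general {X : Type*} (ν : ℕ) (hν : 0 < ν) (d : X → X → ℝ)
    (hX : NuGenMetric ν d) (T : X → X) (m : X → X → ℝ) (x : X)
    (h1 : ∀ ε > (0 : ℝ), ∃ δ > (0 : ℝ), ∃ N : ℕ, ∀ p ≥ N, ∀ q ≥ N,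
      m (T^[p] x) (T^[q] x) < δ + ε → d (T^[p + 1] x) (T^[q + 1] x) ≤ ε)
    (h2 : ∀ p q : ℕ → ℕ, StrictMono p → StrictMono q →
      Filter.limsup (fun i => ENNReal.ofReal (m (T^[p i] x) (T^[q i] x))) Filter.atTop
        ≤ Filter.limsup (fun i => ENNReal.ofReal (d (T^[p i] x) (T^[q i] x))) Filter.atTop)
    (h3 : Filter.Tendsto
      (fun n => d (T^[n] x) (T^[n + 1] x) + d (T^[n] x) (T^[n + 2] x))
      Filter.atTop (nhds 0)) :
    IsKCauchy d (fun n => T^[n] x) 1 := by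
  have hstep₁ : Tendsto (fun n => d (T^[n] x) (T^[n + 1] x)) atTop (𝓝 0) :=
    squeeze_zero (fun _ => hX.1 _ _) (fun _ => le_add_of_nonneg_right (hX.1 _ _)) h3
  have hstep₂ : Tendsto (fun n => d (T^[n] x) (T^[n + 2] x)) atTop (𝓝 0) :=
    squeeze_zero (fun _ => hX.1 _ _) (fun _ => le_add_of_nonneg_left (hX.1 _ _)) h3
  apply isKCauchy_one_of_forall_dist_le
  by_cases hinj : Injective fun n => T^[n] x
  · exact hX.forall_dist_le_of_injective hν hinj h1 h2 hstep₁ hstep₂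
  · obtain ⟨N, hN⟩ := exists_iterate_eq_of_not_injective hX.2.1 hstep₁ hinj
    refine fun r hr => ⟨N, fun n hn k => ?_⟩
    rw [hN n hn, hN (n + 1 + k) (by omega), (hX.2.1 _ _).2 rfl]
    exact hr.le

theorem stmt_5 {X : Type*} (ν : ℕ) (hν : 0 < ν) (d : X → X → ℝ)
    (hX : NuGenMetric ν d) (T : X → X) (m : X → X → ℝ) (hm0 : ∀ a b, 0 ≤ m a b) (x : X)
    (h1 : ∀ ε > (0 : ℝ), ∃ δ > (0 : ℝ), ∃ N : ℕ, ∀ p ≥ N, ∀ q ≥ N,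
      m (T^[p] x) (T^[q] x) < δ + ε → d (T^[p + 1] x) (T^[q + 1] x) ≤ ε)
    (h2 : ∀ p q : ℕ → ℕ, StrictMono p → StrictMono q →
      Filter.limsup (fun i => ENNReal.ofReal (m (T^[p i] x) (T^[q i] x))) Filter.atTop
        ≤ Filter.limsup (fun i => ENNReal.ofReal (d (T^[p i] x) (T^[q i] x))) Filter.atTop)
    (h3 : Filter.Tendsto
      (fun n => d (T^[n] x) (T^[n + 1] x) + d (T^[n] x) (T^[n + 2] x))
      Filter.atTop (nhds 0)) :
    IsKCauchy d (fun n => T^[n] x) 1 :=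
  stmt_5_general ν hν d hX T m x h1 h2 h3
end

section
/- Let (X,d) be a ν-generalized metric space and T : X → X a Ćirić–Matkowski contraction (d(Tx,Ty) < d(x,y) for x ≠ y, and for every ε > 0 there is δ > 0 with d(x,y) < δ + ε implying d(Tx,Ty) ≤ ε). If x ∈ X is such that the iterates T^n x are pairwise distinct, then d(T^n x, T^{n+1} x) → 0 and d(T^n x, T^{n+2} x) → 0 as n → ∞. -/
/-!
Along an orbit of pairwise distinct points, each sequence `n ↦ d(Tⁿx, Tⁿ⁺ᵏx)` is strictly
decreasing and bounded below by `0`, so it converges to its infimum `c`. If `c > 0`, the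
Ćirić–Matkowski condition at `ε = c` pushes one term down to `c`, and the next term is then
strictly below the infimum.
-/

open Filter Topology

theorem tendsto_zero_of_strictAnti_of_ciricMatkowski {s : ℕ → ℝ} (hs₀ : ∀ n, 0 ≤ s n)
    (hs : StrictAnti s)
    (hcm : ∀ ε > (0 : ℝ), ∃ δ > (0 : ℝ), ∀ n, s n < δ + ε → s (n + 1) ≤ ε) :
    Tendsto s atTop (𝓝 0) := by
  have hbdd : BddBelow (Set.range s) := ⟨0, by rintro _ ⟨n, rfl⟩; exact hs₀ n⟩
  have hlim := tendsto_atTop_ciInf hs.antitone hbdd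
  rcases (le_ciInf hs₀ : 0 ≤ ⨅ n, s n).lt_or_eq with hpos | hzero
  · exfalso
    set c := ⨅ n, s n
    obtain ⟨δ, hδ, hstep⟩ := hcm c hpos
    obtain ⟨N, hN⟩ := exists_lt_of_ciInf_lt (lt_add_of_pos_left c hδ)
    have hle : s (N + 1) ≤ c := hstep N hN
    have hlt : s (N + 2) < s (N + 1) := hs (Nat.lt_succ_self _)
    linarith [ciInf_le hbdd (N + 2)]
  · rwa [← hzero] at hlim

theorem tendsto_dist_iterate_iterate_add {X : Type*} {d : X → X → ℝ} {T : X → X}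
    (hd₀ : ∀ x y, 0 ≤ d x y) (hc : ∀ x y : X, x ≠ y → d (T x) (T y) < d x y)
    (hcm : ∀ ε > (0 : ℝ), ∃ δ > (0 : ℝ), ∀ x y : X, d x y < δ + ε → d (T x) (T y) ≤ ε)
    {x : X} (hinj : Function.Injective (fun n : ℕ => T^[n] x)) {k : ℕ} (hk : k ≠ 0) :
    Tendsto (fun n => d (T^[n] x) (T^[n + k] x)) atTop (𝓝 0) := by
  have hsucc : ∀ n, d (T^[n + 1] x) (T^[n + 1 + k] x) = d (T (T^[n] x)) (T (T^[n + k] x)) := by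
    intro n
    rw [Nat.add_right_comm, Function.iterate_succ_apply', Function.iterate_succ_apply']
  refine tendsto_zero_of_strictAnti_of_ciricMatkowski (fun n => hd₀ _ _)
    (strictAnti_nat_of_succ_lt fun n => ?_) fun ε hε => ?_
  · rw [hsucc]
    exact hc _ _ fun h => hk (by simpa using hinj h)
  · obtain ⟨δ, hδ, hstep⟩ := hcm ε hε
    exact ⟨δ, hδ, fun n hn => (hsucc n).symm ▸ hstep _ _ hn⟩

theorem stmt_8_general {X : Type*} (ν : ℕ) (d : X → X → ℝ)
    (hX : NuGenMetric ν d) (T : X → X)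
    (hc : ∀ x y : X, x ≠ y → d (T x) (T y) < d x y)
    (hcm : ∀ ε > (0 : ℝ), ∃ δ > (0 : ℝ), ∀ x y : X,
      d x y < δ + ε → d (T x) (T y) ≤ ε)
    (x : X) (hinj : Function.Injective (fun n : ℕ => T^[n] x)) :
    Filter.Tendsto (fun n => d (T^[n] x) (T^[n + 1] x)) Filter.atTop (nhds 0) ∧
    Filter.Tendsto (fun n => d (T^[n] x) (T^[n + 2] x)) Filter.atTop (nhds 0) :=
  ⟨tendsto_dist_iterate_iterate_add hX.1 hc hcm hinj one_ne_zero,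
    tendsto_dist_iterate_iterate_add hX.1 hc hcm hinj two_ne_zero⟩

theorem stmt_8 {X : Type*} (ν : ℕ) (hν : 0 < ν) (d : X → X → ℝ)
    (hX : NuGenMetric ν d) (T : X → X)
    (hc : ∀ x y : X, x ≠ y → d (T x) (T y) < d x y)
    (hcm : ∀ ε > (0 : ℝ), ∃ δ > (0 : ℝ), ∀ x y : X,
      d x y < δ + ε → d (T x) (T y) ≤ ε)
    (x : X) (hinj : Function.Injective (fun n : ℕ => T^[n] x)) :
    Filter.Tendsto (fun n => d (T^[n] x) (T^[n + 1] x)) Filter.atTop (nhds 0) ∧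
    Filter.Tendsto (fun n => d (T^[n] x) (T^[n + 2] x)) Filter.atTop (nhds 0) :=
  stmt_8_general ν d hX T hc hcm x hinj
end

section
/- Let (X,d) be a ν-generalized metric space with ν odd, and let {x_n} be a ν-Cauchy sequence whose terms are pairwise distinct. Then {x_n} is Cauchy. -/
open Filter Topology

/-! Split the odd number `ν + 1 = p + q` with `p - q ≡ j (mod ν)`; this is possible because `2` is
invertible modulo `ν`. The indices `0, B, B+1, …, B+p-1, j+q-1, j+q-2, …, j` (with `B ≡ 1 (mod ν)`
large) are then pairwise distinct, and consecutive ones differ by `1 + mν` for some `m`. Shifted by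
`n`, they form `ν + 2` distinct terms of the sequence joining `x n` to `x (n + j)` whose consecutive
distances are controlled by the `ν`-Cauchy condition, so the polygon inequality bounds
`d (x n) (x (n + j))` by `(ν + 1)` times that control. -/

theorem isKCauchy_iff {X : Type*} {d : X → X → ℝ} {x : ℕ → X} {k : ℕ} :
    IsKCauchy d x k ↔ ∀ ε > 0, ∃ N, ∀ n ≥ N, ∀ m, d (x n) (x (n + 1 + m * k)) ≤ ε := by
  rw [IsKCauchy, ENNReal.tendsto_nhds_zero]
  constructor
  · intro h ε hε
    obtain ⟨N, hN⟩ := eventually_atTop.1 (h _ (ENNReal.ofReal_pos.2 hε))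
    exact ⟨N, fun n hn m =>
      (ENNReal.ofReal_le_ofReal_iff hε.le).1 ((le_iSup _ m).trans (hN n hn))⟩
  · intro h ε hε
    obtain ⟨r, -, hr, hrε⟩ := ENNReal.lt_iff_exists_real_btwn.1 hε
    obtain ⟨N, hN⟩ := h r (ENNReal.ofReal_pos.1 hr)
    exact eventually_atTop.2 ⟨N, fun n hn =>
      iSup_le fun m => (ENNReal.ofReal_le_ofReal (hN n hn m)).trans hrε.le⟩

theorem NuGenMetric.le_sum_of_injOn {ν : ℕ} {X : Type*} {d : X → X → ℝ} (hX : NuGenMetric ν d)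
    {u : ℕ → X} (hu : Set.InjOn u (Set.Iic (ν + 1))) :
    d (u 0) (u (ν + 1)) ≤ ∑ i ∈ Finset.range (ν + 1), d (u i) (u (i + 1)) := by
  have hfin : Function.Injective fun i : Fin (ν + 2) => u i := fun i i' h =>
    Fin.ext (hu (Nat.lt_succ_iff.1 i.2) (Nat.lt_succ_iff.1 i'.2) h)
  simpa [Fin.sum_univ_eq_sum_range (fun i => d (u i) (u (i + 1)))] using hX.2.2.2 _ hfin

theorem exists_split_sub_modEq_of_odd {ν : ℕ} (hν : Odd ν) (j : ℕ) :
    ∃ p q t : ℕ, 0 < p ∧ 0 < q ∧ p + q = ν + 1 ∧ p + t * ν = j + q := by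
  obtain ⟨c, rfl⟩ := hν
  obtain ⟨k, r, hr, rfl⟩ : ∃ k r, r < 2 * c + 1 ∧ j = k * (2 * c + 1) + r :=
    ⟨j / (2 * c + 1), j % (2 * c + 1), Nat.mod_lt _ (by omega), by
      rw [mul_comm, Nat.div_add_mod]⟩
  rcases Nat.even_or_odd r with ⟨s, rfl⟩ | ⟨s, rfl⟩
  · exact ⟨c + 1 + s, c + 1 - s, k, by omega, by omega, by omega, by omega⟩
  · exact ⟨s + 1, 2 * c + 1 - s, k + 1, by omega, by omega, by omega, by rw [add_mul]; omega⟩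

theorem exists_step_path_of_odd {ν : ℕ} (hν : Odd ν) {j : ℕ} (hj : 0 < j) :
    ∃ a : ℕ → ℕ, a 0 = 0 ∧ a (ν + 1) = j ∧ Set.InjOn a (Set.Iic (ν + 1)) ∧
      ∀ i ≤ ν, ∃ m, a (i + 1) = a i + 1 + m * ν ∨ a i = a (i + 1) + 1 + m * ν := by
  obtain ⟨p, q, t, hp, hq, hpq, hsplit⟩ := exists_split_sub_modEq_of_odd hν j
  obtain ⟨B, hB⟩ : ∃ B, B = 1 + (t + j + q) * ν := ⟨_, rfl⟩
  have hBp : B + p = j + q + 1 + (j + q) * ν := by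
    have : (t + j + q) * ν = t * ν + (j + q) * ν := by ring
    omega
  have hBj : j + q < B := by
    have : j + q ≤ (j + q) * ν := Nat.le_mul_of_pos_right _ hν.pos
    omega
  refine ⟨fun i => if i = 0 then 0 else if i ≤ p then B + i - 1 else j + (ν + 1 - i),
    by simp, by grind, ?_, ?_⟩
  · intro i hi i' hi' h
    simp only [Set.mem_Iic] at hi hi'
    grind
  · intro i hi
    obtain rfl | hi0 := Nat.eq_zero_or_pos i
    · exact ⟨t + j + q, Or.inl (by grind)⟩
    obtain hip | rfl | hip := lt_trichotomy i p
    · exact ⟨0, Or.inl (by grind)⟩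
    · exact ⟨j + q, Or.inr (by grind)⟩
    · exact ⟨0, Or.inr (by grind)⟩

theorem NuGenMetric.le_mul_of_forall_step_le {ν : ℕ} (hν : Odd ν) {X : Type*} {d : X → X → ℝ}
    (hX : NuGenMetric ν d) {x : ℕ → X} (hx : Function.Injective x) {N : ℕ} {δ : ℝ}
    (hδ : ∀ b ≥ N, ∀ m, d (x b) (x (b + 1 + m * ν)) ≤ δ) {n j : ℕ} (hn : N ≤ n) (hj : 0 < j) :
    d (x n) (x (n + j)) ≤ (ν + 1) * δ := by
  obtain ⟨a, ha0, haν, ha, hstep⟩ := exists_step_path_of_odd hν hj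
  have hu : Set.InjOn (fun i => x (n + a i)) (Set.Iic (ν + 1)) := fun i hi i' hi' h =>
    ha hi hi' (Nat.add_left_cancel (hx h))
  have hpoly := hX.le_sum_of_injOn hu
  simp only [ha0, haν, add_zero] at hpoly
  refine hpoly.trans ?_
  calc _ ≤ ∑ _i ∈ Finset.range (ν + 1), δ := Finset.sum_le_sum fun i hi => ?_
    _ = (ν + 1) * δ := by simp
  obtain ⟨m, h | h⟩ := hstep i (Finset.mem_range_succ_iff.1 hi)
  · rw [h, ← add_assoc, ← add_assoc]
    exact hδ _ (by omega) m
  · rw [hX.2.2.1, h, ← add_assoc, ← add_assoc]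
    exact hδ _ (by omega) m

theorem stmt_14 {X : Type*} (ν : ℕ) (hν : Odd ν) (d : X → X → ℝ)
    (hX : NuGenMetric ν d) (x : ℕ → X) (hinj : Function.Injective x)
    (hC : IsKCauchy d x ν) : IsKCauchy d x 1 := by
  rw [isKCauchy_iff] at hC ⊢
  intro ε hε
  obtain ⟨N, hN⟩ := hC (ε / (ν + 1)) (by positivity)
  refine ⟨N, fun n hn m => ?_⟩
  calc d (x n) (x (n + 1 + m * 1)) = d (x n) (x (n + (m + 1))) := by ring_nf
    _ ≤ (ν + 1) * (ε / (ν + 1)) := hX.le_mul_of_forall_step_le hν hinj hN hn m.succ_pos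
    _ = ε := by field_simp
end

section
/- Let (X,d) be a ν-generalized metric space with ν even, and let {x_n} be a ν-Cauchy sequence of pairwise distinct points satisfying d(x_n, x_{n+2}) → 0. Then {x_n} is Cauchy. -/
open Filter Topology

/-- tail sup of an `ENNReal`-valued null sequence is null -/
lemma aux_tail_sup {f : ℕ → ENNReal} (hf : Filter.Tendsto f Filter.atTop (nhds 0)) :
    Filter.Tendsto (fun n => ⨆ k, f (n + k)) Filter.atTop (nhds 0) := by
  rw [ENNReal.tendsto_atTop_zero] at hf ⊢
  intro ε hε
  obtain ⟨N, hN⟩ := hf ε hε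
  exact ⟨N, fun n hn => iSup_le fun k => hN _ (hn.trans (Nat.le_add_right _ _))⟩

theorem stmt_15 {X : Type*} (ν : ℕ) (hν : 0 < ν) (hνe : Even ν) (d : X → X → ℝ)
    (hX : NuGenMetric ν d) (x : ℕ → X) (hinj : Function.Injective x)
    (hd2 : Filter.Tendsto (fun n => d (x n) (x (n + 2))) Filter.atTop (nhds 0))
    (hC : IsKCauchy d x ν) : IsKCauchy d x 1 := by
  obtain ⟨hpos, hzero, hsym, hpoly⟩ := hX
  set S : ℕ → ENNReal := fun n => ⨆ m : ℕ, ENNReal.ofReal (d (x n) (x (n + 1 + m * ν)))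
    with hSdef
  set A : ℕ → ENNReal := fun n => ⨆ k, S (n + k) with hAdef
  set B : ℕ → ENNReal := fun n => ⨆ k, ENNReal.ofReal (d (x (n + k)) (x (n + k + 2)))
    with hBdef
  have hA : Filter.Tendsto A Filter.atTop (nhds 0) := aux_tail_sup hC
  have hB : Filter.Tendsto B Filter.atTop (nhds 0) := by
    rw [hBdef]
    refine aux_tail_sup (f := fun r => ENNReal.ofReal (d (x r) (x (r + 2)))) ?_
    have h1 : Filter.Tendsto (fun r => ENNReal.ofReal (d (x r) (x (r + 2)))) Filter.atTop
        (nhds (ENNReal.ofReal 0)) := (ENNReal.continuous_ofReal.tendsto 0).comp hd2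
    simpa using h1
  -- key estimate
  have key : ∀ n j : ℕ, 1 ≤ j →
      ENNReal.ofReal (d (x n) (x (n + j))) ≤ (ν + 1 : ℕ) * (A n ⊔ B n) := by
    intro n j hj
    set c := (j - 1) % ν with hcdef
    set q := (j - 1) / ν with hqdef
    have hc : c < ν := Nat.mod_lt _ hν
    have hqc : j = 1 + q * ν + c := by
      have h1 : ν * q + c = j - 1 := Nat.div_add_mod (j - 1) ν
      have h2 : q * ν = ν * q := by ring
      omega
    set h : ℕ → ℕ := fun t => t + (t - min t c) with hhdef
    have hstep : ∀ t, h (t + 1) = h t + (if t < c then 1 else 2) := by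
      intro t
      simp only [hhdef]
      rcases Nat.lt_or_ge t c with h | h <;> simp [Nat.min_def] <;> split_ifs <;> omega
    have hmono : StrictMono h := by
      apply strictMono_nat_of_lt_succ
      intro t
      rw [hstep t]
      split_ifs <;> omega
    have hh0 : h 0 = 0 := by simp [hhdef]
    have hhν : h ν = 2 * ν - c := by
      simp only [hhdef, min_eq_right hc.le]
      omega
    set idx : ℕ → ℕ := fun k => if k = 0 then n else n + j + (h ν - h (k - 1)) with hidxdef
    have hne0 : ∀ k, 1 ≤ k → idx k = n + j + (h ν - h (k - 1)) := by
      intro k hk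
      simp only [hidxdef, if_neg (by omega : k ≠ 0)]
    have hi0 : idx 0 = n := by simp [hidxdef]
    have hidx_ge : ∀ k, 1 ≤ k → n + j ≤ idx k := by
      intro k hk
      rw [hne0 k hk]
      omega
    have hidx_inj : ∀ a b : ℕ, a ≤ ν + 1 → b ≤ ν + 1 → idx a = idx b → a = b := by
      intro a b ha hb hab
      rcases Nat.eq_zero_or_pos a with rfl | hapos <;>
        rcases Nat.eq_zero_or_pos b with rfl | hbpos
      · rfl
      · have h1 := hidx_ge b hbpos
        omega
      · have h1 := hidx_ge a hapos
        omega
      · by_contra hne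
        have hd1 : h (a - 1) ≠ h (b - 1) := fun he => hne (by
          have := hmono.injective he
          omega)
        have hlea : h (a - 1) ≤ h ν := hmono.monotone (by omega)
        have hleb : h (b - 1) ≤ h ν := hmono.monotone (by omega)
        rw [hne0 a hapos, hne0 b hbpos] at hab
        omega
    set u : Fin (ν + 2) → X := fun i => x (idx i) with hudef
    have huinj : Function.Injective u := by
      intro a b hab
      have := hinj hab
      exact Fin.ext (hidx_inj _ _ (by omega) (by omega) this)
    have hpol := hpoly u huinj
    have hu0 : u 0 = x n := by
      show x (idx ((0 : Fin (ν + 2)) : ℕ)) = x n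
      rw [Fin.val_zero, hi0]
    have hil : idx (ν + 1) = n + j := by
      rw [hne0 (ν + 1) (by omega)]
      simp
    have hulast : u (Fin.last (ν + 1)) = x (n + j) := by
      show x (idx ((Fin.last (ν + 1)) : ℕ)) = x (n + j)
      rw [Fin.val_last, hil]
    -- bound each edge
    have hedge1 : ENNReal.ofReal (d (x (idx 0)) (x (idx 1))) ≤ A n ⊔ B n := by
      have hexp : (q + 2) * ν = q * ν + 2 * ν := by ring
      have h2 : idx 1 = n + 1 + (q + 2) * ν := by
        rw [hne0 1 (le_refl 1)]
        simp only [Nat.sub_self, hh0]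
        omega
      rw [hi0, h2]
      refine le_sup_of_le_left ?_
      have hle1 : ENNReal.ofReal (d (x n) (x (n + 1 + (q + 2) * ν))) ≤ S n :=
        le_iSup (fun m => ENNReal.ofReal (d (x n) (x (n + 1 + m * ν)))) (q + 2)
      refine hle1.trans ?_
      have := le_iSup (fun k => S (n + k)) 0
      simpa using this
    have hedgek : ∀ k, 1 ≤ k → k ≤ ν →
        ENNReal.ofReal (d (x (idx k)) (x (idx (k + 1)))) ≤ A n ⊔ B n := by
      intro k hk1 hkν
      have hkh : h k = h (k - 1) + (if k - 1 < c then 1 else 2) := by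
        have := hstep (k - 1)
        rwa [show k - 1 + 1 = k by omega] at this
      have hhkν : h k ≤ h ν := hmono.monotone hkν
      have hik : idx k = n + j + (h ν - h (k - 1)) := hne0 k hk1
      have hik1 : idx (k + 1) = n + j + (h ν - h k) := hne0 (k + 1) (by omega)
      have hbge : n ≤ idx (k + 1) := by rw [hik1]; omega
      have hcancel : n + (idx (k + 1) - n) = idx (k + 1) := by omega
      rcases Nat.lt_or_ge (k - 1) c with hlt | hge
      · -- gap 1 edge
        have hgap : idx k = idx (k + 1) + 1 := by
          rw [if_pos hlt] at hkh
          rw [hik, hik1]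
          omega
        rw [hgap, hsym]
        refine le_sup_of_le_left ?_
        have h1 : ENNReal.ofReal (d (x (idx (k + 1))) (x (idx (k + 1) + 1))) ≤ S (idx (k + 1)) := by
          have := le_iSup (fun m => ENNReal.ofReal
            (d (x (idx (k + 1))) (x (idx (k + 1) + 1 + m * ν)))) 0
          simpa using this
        refine h1.trans ?_
        have := le_iSup (fun r => S (n + r)) (idx (k + 1) - n)
        rwa [hcancel] at this
      · -- gap 2 edge
        have hgap : idx k = idx (k + 1) + 2 := by
          rw [if_neg (by omega)] at hkh
          rw [hik, hik1]
          omega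
        rw [hgap, hsym]
        refine le_sup_of_le_right ?_
        have := le_iSup (fun r => ENNReal.ofReal (d (x (n + r)) (x (n + r + 2)))) (idx (k + 1) - n)
        rwa [hcancel] at this
    have hedge : ∀ i : Fin (ν + 1),
        ENNReal.ofReal (d (u i.castSucc) (u i.succ)) ≤ A n ⊔ B n := by
      intro i
      show ENNReal.ofReal (d (x (idx ((i.castSucc : Fin (ν + 2)) : ℕ)))
        (x (idx ((i.succ : Fin (ν + 2)) : ℕ)))) ≤ A n ⊔ B n
      have hcs : ((i.castSucc : Fin (ν + 2)) : ℕ) = (i : ℕ) := rfl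
      have hss : ((i.succ : Fin (ν + 2)) : ℕ) = (i : ℕ) + 1 := rfl
      rw [hcs, hss]
      rcases Nat.eq_zero_or_pos (i : ℕ) with hz | hp
      · rw [hz]
        exact hedge1
      · exact hedgek (i : ℕ) hp (by omega)
    calc ENNReal.ofReal (d (x n) (x (n + j)))
        ≤ ENNReal.ofReal (∑ i : Fin (ν + 1), d (u i.castSucc) (u i.succ)) := by
          rw [← hu0, ← hulast]
          exact ENNReal.ofReal_le_ofReal hpol
      _ = ∑ i : Fin (ν + 1), ENNReal.ofReal (d (u i.castSucc) (u i.succ)) :=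
          ENNReal.ofReal_sum_of_nonneg (fun i _ => hpos _ _)
      _ ≤ ∑ _i : Fin (ν + 1), (A n ⊔ B n) := Finset.sum_le_sum (fun i _ => hedge i)
      _ = (ν + 1 : ℕ) * (A n ⊔ B n) := by
          rw [Finset.sum_const, Finset.card_univ, Fintype.card_fin, nsmul_eq_mul]
  -- conclude
  rw [IsKCauchy]
  have hub : ∀ n, (⨆ m : ℕ, ENNReal.ofReal (d (x n) (x (n + 1 + m * 1)))) ≤
      (ν + 1 : ℕ) * (A n ⊔ B n) := by
    intro n
    refine iSup_le fun m => ?_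
    have he : n + 1 + m * 1 = n + (1 + m) := by omega
    rw [he]
    exact key n (1 + m) (by omega)
  refine tendsto_of_tendsto_of_tendsto_of_le_of_le tendsto_const_nhds ?_
    (fun n => zero_le) hub
  have hmax : Filter.Tendsto (fun n => A n ⊔ B n) Filter.atTop (nhds 0) := by
    have := hA.max hB
    simpa using this
  have hfin := ENNReal.Tendsto.const_mul (a := ((ν + 1 : ℕ) : ENNReal)) hmax
    (Or.inr (by simp))
  simpa using hfin
end
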